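/- arXiv:1509.06802 — 6 statements merged into one kernel-verified Lean document; each statement's English description precedes it below -/
import Mathlib

section
/- Let K be a finite group acting on a finite-dimensional Hilbert space H by a unitary representation ρ, and suppose H decomposes as an orthogonal direct sum of two irreducible invariant subspaces M₁ and M₂ of dimensions d₁ and d₂, on which ρ acts by inequivalent irreducible representations. Let P₁, P₂ be the orthogonal projections onto M₁, M₂. Then for nonzero f ∈ H, the orbit {ρ(ξ)f}_{ξ∈K} is a tight frame for H if and only if ‖P₁f‖²/d₁ = ‖P₂f‖²/d₂. -/
/-!
Summing the frame identity over an orthonormal basis of an invariant subspace `M` shows that a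
tight orbit frame with bound `A` satisfies `A · dim M = |K| · ‖P_M f‖²`, which gives the ratio
condition. Conversely, the frame operator `S = ∑ ξ, ⟪ρ ξ f, ·⟫ • ρ ξ f` is self-adjoint and commutes
with `ρ`. By Schur's lemma the compression `M₁ → M₂` of `S` vanishes, since the two representations
are inequivalent, so `S` preserves `M₁` and `M₂` and acts on each `Mᵢ` as a scalar `cᵢ`; taking
traces gives `cᵢ · dᵢ = |K| · ‖Pᵢ f‖²`. The ratio condition thus says `c₁ = c₂`, i.e. `S` is a
multiple of the identity.
-/

open scoped InnerProductSpace
open Module Submodule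

section TightFrames

variable {H : Type*} [NormedAddCommGroup H] [InnerProductSpace ℂ H]

section Frame

variable {ι : Type*} [Fintype ι]

def IsTightFrame (v : ι → H) (A : ℝ) : Prop :=
  ∀ g : H, ∑ i, ‖⟪g, v i⟫_ℂ‖ ^ 2 = A * ‖g‖ ^ 2

noncomputable def frameOperator (v : ι → H) : H →ₗ[ℂ] H :=
  ∑ i, (innerₛₗ ℂ (v i)).smulRight (v i)

theorem frameOperator_apply (v : ι → H) (g : H) :
    frameOperator v g = ∑ i, ⟪v i, g⟫_ℂ • v i := by
  simp [frameOperator]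

theorem inner_frameOperator_self (v : ι → H) (g : H) :
    ⟪g, frameOperator v g⟫_ℂ = ((∑ i, ‖⟪g, v i⟫_ℂ‖ ^ 2 : ℝ) : ℂ) := by
  rw [frameOperator_apply, inner_sum]
  push_cast
  refine Finset.sum_congr rfl fun i _ ↦ ?_
  rw [inner_smul_right, ← inner_conj_symm (v i) g, RCLike.conj_mul]
  rfl

theorem frameOperator_isSymmetric (v : ι → H) : (frameOperator v).IsSymmetric := fun g h ↦ by
  simp_rw [frameOperator_apply, sum_inner, inner_sum, inner_smul_left, inner_smul_right,
    inner_conj_symm, mul_comm]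

theorem IsTightFrame.of_frameOperator_eq_smul {v : ι → H} {A : ℝ}
    (h : ∀ g, frameOperator v g = (A : ℂ) • g) : IsTightFrame v A := fun g ↦ by
  have := inner_frameOperator_self v g
  rw [h, inner_smul_right, inner_self_eq_norm_sq_to_K] at this
  exact Complex.ofReal_injective (by push_cast at this ⊢; exact this.symm)

theorem IsTightFrame.pos {v : ι → H} {A : ℝ} (h : IsTightFrame v A) {i : ι} (hi : v i ≠ 0) :
    0 < A := by
  have hvi : 0 < ‖v i‖ ^ 2 := by positivity
  have hle : ‖v i‖ ^ 2 * ‖v i‖ ^ 2 ≤ A * ‖v i‖ ^ 2 := by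
    rw [← h, ← sq, show ‖v i‖ ^ 2 = ‖⟪v i, v i⟫_ℂ‖ by simp [inner_self_eq_norm_sq_to_K]]
    exact Finset.single_le_sum (f := fun j ↦ ‖⟪v i, v j⟫_ℂ‖ ^ 2) (fun _ _ ↦ by positivity)
      (Finset.mem_univ i)
  exact hvi.trans_le (le_of_mul_le_mul_right hle hvi)

theorem IsTightFrame.sum_orthonormalBasis {v : ι → H} {A : ℝ} (h : IsTightFrame v A)
    {M : Submodule ℂ H} {κ : Type*} [Fintype κ] (b : OrthonormalBasis κ ℂ M) :
    ∑ j, ∑ i, ‖⟪(b j : H), v i⟫_ℂ‖ ^ 2 = A * Fintype.card κ := by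
  simp [fun j ↦ h (b j : H), Submodule.norm_coe, b.norm_eq_one, mul_comm]

end Frame

theorem OrthonormalBasis.sum_sq_norm_inner_coe_right {M : Submodule ℂ H}
    [M.HasOrthogonalProjection] {κ : Type*} [Fintype κ] (b : OrthonormalBasis κ ℂ M) (v : H) :
    ∑ j, ‖⟪(b j : H), v⟫_ℂ‖ ^ 2 = ‖M.starProjection v‖ ^ 2 := by
  simp_rw [← inner_orthogonalProjectionOnto_eq_of_mem_left, b.sum_sq_norm_inner_right]
  rfl

theorem starProjection_apply_map_of_mapsTo {M : Submodule ℂ H} [M.HasOrthogonalProjection]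
    {F : Type*} [FunLike F H H] [LinearMapClass F ℂ H H] (e : F) (hM : ∀ v ∈ M, e v ∈ M)
    (hM' : ∀ v ∈ Mᗮ, e v ∈ Mᗮ) (v : H) :
    M.starProjection (e v) = e (M.starProjection v) :=
  eq_starProjection_of_mem_orthogonal (hM _ (M.orthogonalProjectionOnto v).2)
    (by rw [← map_sub]; exact hM' _ (sub_starProjection_mem_orthogonal v))

section Representation

variable {K : Type*} [Monoid K] (ρ : K →* (H ≃ₗᵢ[ℂ] H))

def IsInvariantSubspace (W : Submodule ℂ H) : Prop :=
  ∀ ξ : K, ∀ v ∈ W, ρ ξ v ∈ W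

structure IsIrreducibleSubspace (M : Submodule ℂ H) : Prop where
  isInvariant : IsInvariantSubspace ρ M
  ne_bot : M ≠ ⊥
  eq_bot_or_eq : ∀ W : Submodule ℂ H, W ≤ M → IsInvariantSubspace ρ W → W = ⊥ ∨ W = M

/-- `ρ ξ` does not act on the subtype `M`; its restriction is encoded by the relation
`w = ρ ξ v` between elements of `M`. -/
def IsIntertwiner {M N : Submodule ℂ H} (T : M →ₗ[ℂ] N) : Prop :=
  ∀ (ξ : K) (v w : M), (w : H) = ρ ξ (v : H) → (T w : H) = ρ ξ (T v : H)

variable {ρ}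

theorem IsIrreducibleSubspace.eq_bot_or_eq_top {M : Submodule ℂ H} (hM : IsIrreducibleSubspace ρ M)
    {W : Submodule ℂ M} (hW : IsInvariantSubspace ρ (W.map M.subtype)) : W = ⊥ ∨ W = ⊤ := by
  have hinj := map_injective_of_injective M.injective_subtype
  rcases hM.eq_bot_or_eq _ (map_subtype_le M W) hW with h | h
  · exact .inl (hinj (h.trans (Submodule.map_bot _).symm))
  · exact .inr (hinj (h.trans (map_subtype_top M).symm))

theorem IsIntertwiner.eq_zero_or_bijective {M N : Submodule ℂ H} (hM : IsIrreducibleSubspace ρ M)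
    (hN : IsIrreducibleSubspace ρ N) {T : M →ₗ[ℂ] N} (hT : IsIntertwiner ρ T) :
    T = 0 ∨ Function.Bijective T := by
  have hker : IsInvariantSubspace ρ ((LinearMap.ker T).map M.subtype) := by
    rintro ξ _ ⟨u, hu, rfl⟩
    refine ⟨⟨ρ ξ u, hM.isInvariant ξ u u.2⟩, ?_, rfl⟩
    have := hT ξ u ⟨ρ ξ u, hM.isInvariant ξ u u.2⟩ rfl
    simp_all
  have hrange : IsInvariantSubspace ρ ((LinearMap.range T).map N.subtype) := by
    rintro ξ _ ⟨_, ⟨u, rfl⟩, rfl⟩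
    exact ⟨T ⟨ρ ξ u, hM.isInvariant ξ u u.2⟩, ⟨_, rfl⟩, hT ξ u _ rfl⟩
  rcases hM.eq_bot_or_eq_top hker with hk | hk
  · rcases hN.eq_bot_or_eq_top hrange with hr | hr
    · exact .inl (LinearMap.range_eq_bot.1 hr)
    · exact .inr ⟨LinearMap.ker_eq_bot.1 hk, LinearMap.range_eq_top.1 hr⟩
  · exact .inl (LinearMap.ker_eq_top.1 hk)

theorem IsIrreducibleSubspace.exists_eq_smul [FiniteDimensional ℂ H] {M : Submodule ℂ H}
    (hM : IsIrreducibleSubspace ρ M) {S : Module.End ℂ H} (hSM : M ∈ Module.End.invtSubmodule S)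
    (hS : ∀ ξ g, S (ρ ξ g) = ρ ξ (S g)) : ∃ c : ℂ, ∀ v ∈ M, S v = c • v := by
  have : Nontrivial M := nontrivial_iff_ne_bot.2 hM.ne_bot
  obtain ⟨c, hc⟩ := Module.End.exists_eigenvalue (S.restrict hSM)
  obtain ⟨u, hu, hu0⟩ := hc.exists_hasEigenvector
  have hSu : S u = c • (u : H) := congrArg Subtype.val (Module.End.mem_eigenspace_iff.1 hu)
  let W := M ⊓ LinearMap.ker (S - c • 1)
  have hW : IsInvariantSubspace ρ W := by
    rintro ξ v ⟨hvM, hv⟩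
    refine ⟨hM.isInvariant ξ v hvM, ?_⟩
    simp_all [sub_eq_zero]
  have hWM : W = M := by
    refine (hM.eq_bot_or_eq W inf_le_left hW).resolve_left fun hbot ↦ hu0 ?_
    have huW : (u : H) ∈ W := ⟨u.2, by simp [hSu]⟩
    simpa [hbot] using huW
  refine ⟨c, fun v hv ↦ ?_⟩
  have hvW : v ∈ W := hWM ▸ hv
  simpa [sub_eq_zero] using hvW.2

end Representation

section Orbit

variable {K : Type*} [Group K] {ρ : K →* (H ≃ₗᵢ[ℂ] H)}

theorem IsInvariantSubspace.orthogonal {M : Submodule ℂ H} (hM : IsInvariantSubspace ρ M) :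
    IsInvariantSubspace ρ Mᗮ := fun ξ v hv u hu ↦ by
  have hu' : ρ ξ (ρ ξ⁻¹ u) = u := by
    change (ρ ξ * ρ ξ⁻¹) u = u
    rw [← map_mul, mul_inv_cancel, map_one, LinearIsometryEquiv.coe_one, id]
  rw [← hu', LinearIsometryEquiv.inner_map_map]
  exact hv _ (hM _ u hu)

theorem IsInvariantSubspace.starProjection_apply {M : Submodule ℂ H} [M.HasOrthogonalProjection]
    (hM : IsInvariantSubspace ρ M) (ξ : K) (v : H) :
    M.starProjection (ρ ξ v) = ρ ξ (M.starProjection v) :=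
  starProjection_apply_map_of_mapsTo (ρ ξ) (hM ξ) (hM.orthogonal ξ) v

theorem IsIrreducibleSubspace.mem_invtSubmodule_of_commute [FiniteDimensional ℂ H]
    {M : Submodule ℂ H}
    (hM : IsIrreducibleSubspace ρ M) (hM' : IsIrreducibleSubspace ρ Mᗮ)
    (hineq : ¬∃ T : M ≃ₗ[ℂ] Mᗮ, IsIntertwiner ρ (T : M →ₗ[ℂ] Mᗮ)) {S : Module.End ℂ H}
    (hS : ∀ ξ g, S (ρ ξ g) = ρ ξ (S g)) : M ∈ Module.End.invtSubmodule S := by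
  let T : M →ₗ[ℂ] Mᗮ := (Mᗮ.orthogonalProjectionOnto : H →ₗ[ℂ] Mᗮ) ∘ₗ S ∘ₗ M.subtype
  have hT : IsIntertwiner ρ T := fun ξ v w hw ↦ by
    change Mᗮ.starProjection (S w) = ρ ξ (Mᗮ.starProjection (S v))
    rw [hw, hS, hM'.isInvariant.starProjection_apply]
  have hT0 : T = 0 := (hT.eq_zero_or_bijective hM hM').resolve_right fun hbij ↦
    hineq ⟨.ofBijective T hbij, hT⟩
  intro v hv
  have : Mᗮ.orthogonalProjectionOnto (S v) = 0 := LinearMap.congr_fun hT0 ⟨v, hv⟩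
  simpa using orthogonalProjectionOnto_eq_zero_iff.1 this

theorem IsIrreducibleSubspace.exists_eq_smul_of_isSymmetric [FiniteDimensional ℂ H]
    {M : Submodule ℂ H}
    (hM : IsIrreducibleSubspace ρ M) (hM' : IsIrreducibleSubspace ρ Mᗮ)
    (hineq : ¬∃ T : M ≃ₗ[ℂ] Mᗮ, IsIntertwiner ρ (T : M →ₗ[ℂ] Mᗮ)) {S : Module.End ℂ H}
    (hSsymm : S.IsSymmetric) (hS : ∀ ξ g, S (ρ ξ g) = ρ ξ (S g)) :
    ∃ c₁ c₂ : ℂ, (∀ v ∈ M, S v = c₁ • v) ∧ ∀ v ∈ Mᗮ, S v = c₂ • v := by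
  have hSM := hM.mem_invtSubmodule_of_commute hM' hineq hS
  obtain ⟨c₁, h₁⟩ := hM.exists_eq_smul hSM hS
  obtain ⟨c₂, h₂⟩ := hM'.exists_eq_smul (hSsymm.orthogonalComplement_mem_invtSubmodule hSM) hS
  exact ⟨c₁, c₂, h₁, h₂⟩

variable [Fintype K]

theorem IsInvariantSubspace.sum_sum_sq_norm_inner_orbit {M : Submodule ℂ H}
    [M.HasOrthogonalProjection] (hM : IsInvariantSubspace ρ M) {κ : Type*} [Fintype κ]
    (b : OrthonormalBasis κ ℂ M) (f : H) :
    ∑ j, ∑ ξ, ‖⟪(b j : H), ρ ξ f⟫_ℂ‖ ^ 2 = Fintype.card K * ‖M.starProjection f‖ ^ 2 := by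
  simp_rw [Finset.sum_comm (γ := κ), b.sum_sq_norm_inner_coe_right, hM.starProjection_apply,
    LinearIsometryEquiv.norm_map, Finset.sum_const, Finset.card_univ, nsmul_eq_mul]

theorem frameOperator_orbit_apply_map (f : H) (η : K) (g : H) :
    frameOperator (fun ξ ↦ ρ ξ f) (ρ η g) = ρ η (frameOperator (fun ξ ↦ ρ ξ f) g) := by
  simp_rw [frameOperator_apply, map_sum, map_smul]
  refine (Fintype.sum_equiv (Equiv.mulLeft η) _ _ fun ξ ↦ ?_).symm
  simp [LinearIsometryEquiv.inner_map_map]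

variable [FiniteDimensional ℂ H]

theorem IsTightFrame.mul_finrank_eq {f : H} {A : ℝ} (h : IsTightFrame (fun ξ ↦ ρ ξ f) A)
    {M : Submodule ℂ H} (hM : IsInvariantSubspace ρ M) :
    A * finrank ℂ M = Fintype.card K * ‖M.starProjection f‖ ^ 2 := by
  rw [← hM.sum_sum_sq_norm_inner_orbit (stdOrthonormalBasis ℂ M), h.sum_orthonormalBasis,
    Fintype.card_fin]

theorem IsTightFrame.sq_norm_starProjection_div_finrank {f : H} {A : ℝ}
    (h : IsTightFrame (fun ξ ↦ ρ ξ f) A) {M : Submodule ℂ H} (hM : IsIrreducibleSubspace ρ M) :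
    ‖M.starProjection f‖ ^ 2 / finrank ℂ M = A / Fintype.card K := by
  have hd : (finrank ℂ M : ℝ) ≠ 0 := by simpa using hM.ne_bot
  have hK : (Fintype.card K : ℝ) ≠ 0 := by positivity
  rw [div_eq_div_iff hd hK, mul_comm, h.mul_finrank_eq hM.isInvariant]

theorem IsInvariantSubspace.mul_finrank_eq_of_frameOperator_eq_smul {f : H} {M : Submodule ℂ H}
    (hM : IsInvariantSubspace ρ M) {c : ℂ}
    (hc : ∀ v ∈ M, frameOperator (fun ξ ↦ ρ ξ f) v = c • v) :
    c * finrank ℂ M = ((Fintype.card K * ‖M.starProjection f‖ ^ 2 : ℝ) : ℂ) := by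
  let b := stdOrthonormalBasis ℂ M
  have hb : ∀ j, ⟪(b j : H), frameOperator (fun ξ ↦ ρ ξ f) (b j)⟫_ℂ = c := fun j ↦ by
    rw [hc _ (b j).2, inner_smul_right, inner_self_eq_norm_sq_to_K, Submodule.norm_coe,
      b.norm_eq_one]
    simp
  calc c * finrank ℂ M = ∑ j, ⟪(b j : H), frameOperator (fun ξ ↦ ρ ξ f) (b j)⟫_ℂ := by
        simp [hb, mul_comm]
    _ = _ := by
        simp_rw [inner_frameOperator_self, ← Complex.ofReal_sum,
          hM.sum_sum_sq_norm_inner_orbit b]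

theorem IsIrreducibleSubspace.frameOperator_orbit_eq_smul {M : Submodule ℂ H}
    (hM : IsIrreducibleSubspace ρ M) (hM' : IsIrreducibleSubspace ρ Mᗮ)
    (hineq : ¬∃ T : M ≃ₗ[ℂ] Mᗮ, IsIntertwiner ρ (T : M →ₗ[ℂ] Mᗮ)) {f : H}
    (hratio : ‖M.starProjection f‖ ^ 2 / finrank ℂ M = ‖Mᗮ.starProjection f‖ ^ 2 / finrank ℂ Mᗮ)
    (g : H) :
    frameOperator (fun ξ ↦ ρ ξ f) g
      = ((Fintype.card K * (‖M.starProjection f‖ ^ 2 / finrank ℂ M) : ℝ) : ℂ) • g := by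
  have scalar_eq {N : Submodule ℂ H} (hN : IsIrreducibleSubspace ρ N) {c : ℂ}
      (hc : ∀ v ∈ N, frameOperator (fun ξ ↦ ρ ξ f) v = c • v) :
      c = ((Fintype.card K * (‖N.starProjection f‖ ^ 2 / finrank ℂ N) : ℝ) : ℂ) := by
    have hN0 : (finrank ℂ N : ℂ) ≠ 0 := by simpa using hN.ne_bot
    rw [← mul_div_cancel_right₀ c hN0, hN.isInvariant.mul_finrank_eq_of_frameOperator_eq_smul hc]
    push_cast
    ring
  obtain ⟨c₁, c₂, hc₁, hc₂⟩ := hM.exists_eq_smul_of_isSymmetric hM' hineq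
    (frameOperator_isSymmetric _) (frameOperator_orbit_apply_map f)
  rw [← M.starProjection_add_starProjection_orthogonal g, map_add,
    hc₁ _ (M.starProjection_apply_mem g), hc₂ _ (Mᗮ.starProjection_apply_mem g),
    scalar_eq hM hc₁, scalar_eq hM' hc₂, ← hratio, smul_add]

end Orbit

end TightFrames

theorem orbit_tight_frame_iff_proj_ratio_general
    {K : Type*} [Group K] [Fintype K]
    {H : Type*} [NormedAddCommGroup H] [InnerProductSpace ℂ H] [FiniteDimensional ℂ H]
    (ρ : K →* (H ≃ₗᵢ[ℂ] H))
    (M₁ M₂ : Submodule ℂ H)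
    (horth : M₂ = M₁ᗮ)
    (hinv₁ : ∀ ξ : K, ∀ v ∈ M₁, ρ ξ v ∈ M₁)
    (hne₁ : M₁ ≠ ⊥) (hne₂ : M₂ ≠ ⊥)
    (hirr₁ : ∀ W : Submodule ℂ H, W ≤ M₁ → (∀ ξ : K, ∀ v ∈ W, ρ ξ v ∈ W) → W = ⊥ ∨ W = M₁)
    (hirr₂ : ∀ W : Submodule ℂ H, W ≤ M₂ → (∀ ξ : K, ∀ v ∈ W, ρ ξ v ∈ W) → W = ⊥ ∨ W = M₂)
    (hineq : ¬ ∃ T : M₁ ≃ₗ[ℂ] M₂, ∀ (ξ : K) (v w : M₁),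
      (w : H) = ρ ξ (v : H) → ((T w : M₂) : H) = ρ ξ ((T v : M₂) : H))
    (f : H) (hf : f ≠ 0) :
    (∃ A : ℝ, 0 < A ∧ ∀ g : H, ∑ ξ : K, ‖(inner ℂ g (ρ ξ f) : ℂ)‖ ^ 2 = A * ‖g‖ ^ 2)
      ↔ ‖(M₁.orthogonalProjectionOnto f : M₁)‖ ^ 2 / (Module.finrank ℂ M₁ : ℝ)
          = ‖(M₂.orthogonalProjectionOnto f : M₂)‖ ^ 2 / (Module.finrank ℂ M₂ : ℝ) := by
  subst horth
  have h₁ : IsIrreducibleSubspace ρ M₁ := ⟨hinv₁, hne₁, hirr₁⟩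
  have h₂ : IsIrreducibleSubspace ρ M₁ᗮ := ⟨h₁.isInvariant.orthogonal, hne₂, hirr₂⟩
  simp only [← Submodule.norm_coe, ← starProjection_apply]
  constructor
  · rintro ⟨A, -, hA⟩
    exact (IsTightFrame.sq_norm_starProjection_div_finrank hA h₁).trans
      (IsTightFrame.sq_norm_starProjection_div_finrank hA h₂).symm
  · intro hratio
    have hA := IsTightFrame.of_frameOperator_eq_smul (h₁.frameOperator_orbit_eq_smul h₂ hineq hratio)
    exact ⟨_, hA.pos (i := 1) (by simpa using hf), hA⟩

/-- For a unitary representation of a finite group on `H = M₁ ⊕ M₂` (orthogonal sum of two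
inequivalent irreducible invariant subspaces), the orbit of a nonzero `f` is a tight frame
for `H` iff `‖P₁f‖²/d₁ = ‖P₂f‖²/d₂`. -/
theorem orbit_tight_frame_iff_proj_ratio
    {K : Type*} [Group K] [Fintype K]
    {H : Type*} [NormedAddCommGroup H] [InnerProductSpace ℂ H] [FiniteDimensional ℂ H]
    (ρ : K →* (H ≃ₗᵢ[ℂ] H))
    (M₁ M₂ : Submodule ℂ H)
    (horth : M₂ = M₁ᗮ)
    (hinv₁ : ∀ ξ : K, ∀ v ∈ M₁, ρ ξ v ∈ M₁)
    (hinv₂ : ∀ ξ : K, ∀ v ∈ M₂, ρ ξ v ∈ M₂)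
    (hne₁ : M₁ ≠ ⊥) (hne₂ : M₂ ≠ ⊥)
    (hirr₁ : ∀ W : Submodule ℂ H, W ≤ M₁ → (∀ ξ : K, ∀ v ∈ W, ρ ξ v ∈ W) → W = ⊥ ∨ W = M₁)
    (hirr₂ : ∀ W : Submodule ℂ H, W ≤ M₂ → (∀ ξ : K, ∀ v ∈ W, ρ ξ v ∈ W) → W = ⊥ ∨ W = M₂)
    (hineq : ¬ ∃ T : M₁ ≃ₗ[ℂ] M₂, ∀ (ξ : K) (v w : M₁),
      (w : H) = ρ ξ (v : H) → ((T w : M₂) : H) = ρ ξ ((T v : M₂) : H))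
    (f : H) (hf : f ≠ 0) :
    (∃ A : ℝ, 0 < A ∧ ∀ g : H, ∑ ξ : K, ‖(inner ℂ g (ρ ξ f) : ℂ)‖ ^ 2 = A * ‖g‖ ^ 2)
      ↔ ‖(M₁.orthogonalProjectionOnto f : M₁)‖ ^ 2 / (Module.finrank ℂ M₁ : ℝ)
          = ‖(M₂.orthogonalProjectionOnto f : M₂)‖ ^ 2 / (Module.finrank ℂ M₂ : ℝ) :=
  orbit_tight_frame_iff_proj_ratio_general ρ M₁ M₂ horth hinv₁ hne₁ hne₂ hirr₁ hirr₂ hineq f hf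
end

section
/- Let G be a finite group acting 2-transitively on a finite set X with |X| ≥ 2, inducing the permutation representation ρ on ℓ²(X) given by (ρ(g)ψ)_x = ψ_{g⁻¹·x}. Fix a nonzero vector f = (f_x)_{x∈X} ∈ ℓ²(X). Then {ρ(g)f : g ∈ G} is a tight frame for ℓ²(X) if and only if |Σ_{x∈X} f_x|² = Σ_{x∈X} |f_x|². -/
/-!
The frame operator `S = ∑ g, |ρ(g) f⟩⟨ρ(g) f|` commutes with the action, so by 2-transitivity its
matrix is constant on the diagonal and constant off it: `S = (α - β) I + β J` with `J` the
all-ones matrix. Comparing traces gives `|X| α = |G| ‖f‖²`, and comparing `⟨𝟙, S 𝟙⟩` gives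
`|X| α + |X| (|X| - 1) β = |G| |∑ f|²`. Since `|X| ≥ 2`, `I` and `J` are linearly independent, so
the orbit is a tight frame iff `β = 0`, i.e. iff `|∑ f|² = ‖f‖²`.
-/

open Finset ComplexConjugate

section InvariantKernel

variable {G X α : Type*} [Group G] [MulAction G X] {K : X → X → α}

theorem eq_of_ne_of_smul_invariant (hK : ∀ (g : G) x y, K (g • x) (g • y) = K x y)
    (h2 : ∀ x y w z : X, x ≠ y → w ≠ z → ∃ g : G, g • x = w ∧ g • y = z)
    {x y w z : X} (hxy : x ≠ y) (hwz : w ≠ z) : K x y = K w z := by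
  obtain ⟨g, rfl, rfl⟩ := h2 x y w z hxy hwz
  exact (hK g x y).symm

theorem diag_eq_of_smul_invariant [Fintype X] (hK : ∀ (g : G) x y, K (g • x) (g • y) = K x y)
    (h2 : ∀ x y w z : X, x ≠ y → w ≠ z → ∃ g : G, g • x = w ∧ g • y = z)
    (hcard : 2 ≤ Fintype.card X) (x w : X) : K x x = K w w := by
  obtain ⟨y, hy⟩ := Fintype.exists_ne_of_one_lt_card hcard x
  obtain ⟨z, hz⟩ := Fintype.exists_ne_of_one_lt_card hcard w
  obtain ⟨g, rfl, -⟩ := h2 x y w z hy.symm hz.symm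
  exact (hK g x x).symm

end InvariantKernel

section QuadraticForm

variable {X : Type*} [Fintype X]

theorem sum_sum_conj_mul_mul_ite [DecidableEq X] (h : EuclideanSpace ℂ X) (a b : ℝ) :
    ∑ x, ∑ y, conj (h x) * h y * ((if x = y then a else b : ℝ) : ℂ)
      = (((a - b) * ‖h‖ ^ 2 + b * ‖∑ x, h x‖ ^ 2 : ℝ) : ℂ) := by
  have hite : ∀ x y : X, ((if x = y then a else b : ℝ) : ℂ)
      = (if x = y then ((a - b : ℝ) : ℂ) else 0) + (b : ℂ) := by
    intro x y; split_ifs <;> push_cast <;> ring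
  simp_rw [hite, mul_add, sum_add_distrib, mul_ite, mul_zero, sum_ite_eq, mem_univ, if_true,
    ← sum_mul, ← mul_sum, ← sum_mul, ← map_sum]
  simp_rw [Complex.conj_mul', EuclideanSpace.norm_sq_eq]
  push_cast
  ring

theorem exists_forall_eq_mul_norm_sq_iff (hcard : 2 ≤ Fintype.card X) (a b : ℝ) :
    (∃ A : ℝ, 0 < A ∧ ∀ h : EuclideanSpace ℂ X, a * ‖h‖ ^ 2 + b * ‖∑ x, h x‖ ^ 2 = A * ‖h‖ ^ 2)
      ↔ 0 < a ∧ b = 0 := by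
  classical
  constructor
  · rintro ⟨A, hA, hform⟩
    obtain ⟨x₀⟩ : Nonempty X := Fintype.card_pos_iff.mp (by omega)
    have hdelta := hform (EuclideanSpace.single x₀ 1)
    have hconst := hform (WithLp.toLp 2 fun _ => 1)
    simp [EuclideanSpace.norm_sq_eq] at hdelta hconst
    have hn : (2 : ℝ) ≤ Fintype.card X := by exact_mod_cast hcard
    have hb : b * (Fintype.card X * (Fintype.card X - 1)) = 0 := by
      linear_combination hconst - (Fintype.card X : ℝ) * hdelta
    obtain rfl : b = 0 :=
      (mul_eq_zero.mp hb).resolve_right (mul_pos (by linarith) (by linarith)).ne'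
    exact ⟨by linarith, rfl⟩
  · rintro ⟨ha, rfl⟩
    exact ⟨a, ha, fun h => by ring⟩

end QuadraticForm

section FrameKernel

variable {G X : Type*} [Group G] [Fintype G] [MulAction G X]

variable (G) in
/-- Matrix entries of the frame operator `∑ g, |ρ(g) f⟩⟨ρ(g) f|` of the orbit of `f`. -/
def frameKernel (f : EuclideanSpace ℂ X) (x y : X) : ℂ :=
  ∑ g : G, f (g⁻¹ • x) * conj (f (g⁻¹ • y))

theorem frameKernel_smul_smul (f : EuclideanSpace ℂ X) (a : G) (x y : X) :
    frameKernel G f (a • x) (a • y) = frameKernel G f x y := by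
  unfold frameKernel
  rw [← Equiv.sum_comp (Equiv.mulLeft a)]
  simp [mul_smul]

variable [Fintype X]

theorem ofReal_sum_norm_inner_sq (f h : EuclideanSpace ℂ X) :
    ((∑ g : G, ‖(inner ℂ h (WithLp.toLp 2 fun x => f (g⁻¹ • x)) : ℂ)‖ ^ 2 : ℝ) : ℂ)
      = ∑ x, ∑ y, conj (h x) * h y * frameKernel G f x y := by
  have hinner : ∀ g : G, (inner ℂ h (WithLp.toLp 2 fun x => f (g⁻¹ • x)) : ℂ)
      = ∑ x, conj (h x) * f (g⁻¹ • x) := by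
    intro g
    simp [PiLp.inner_apply, mul_comm]
  push_cast
  simp_rw [← Complex.mul_conj', hinner, map_sum, sum_mul_sum, frameKernel, mul_sum]
  rw [sum_comm]
  refine sum_congr rfl fun x _ => ?_
  rw [sum_comm]
  refine sum_congr rfl fun y _ => sum_congr rfl fun g _ => ?_
  simp only [map_mul, Complex.conj_conj]
  ring

theorem sum_frameKernel_diag (f : EuclideanSpace ℂ X) :
    ∑ x, frameKernel G f x x = (Fintype.card G * ‖f‖ ^ 2 : ℝ) := by
  unfold frameKernel
  rw [sum_comm]
  have hg : ∀ g : G, ∑ x, f (g⁻¹ • x) * conj (f (g⁻¹ • x)) = ∑ x, f x * conj (f x) :=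
    fun g => Equiv.sum_comp (MulAction.toPerm g⁻¹) fun x => f x * conj (f x)
  simp only [hg]
  simp [EuclideanSpace.norm_sq_eq, Complex.mul_conj']

theorem sum_sum_frameKernel (f : EuclideanSpace ℂ X) :
    ∑ x, ∑ y, frameKernel G f x y = (Fintype.card G * ‖∑ x, f x‖ ^ 2 : ℝ) := by
  have hg : ∀ g : G, ∑ x, f (g⁻¹ • x) = ∑ x, f x := fun g =>
    Equiv.sum_comp (MulAction.toPerm g⁻¹) (fun x => f x)
  unfold frameKernel
  simp_rw [sum_comm (s := univ (α := X)) (t := univ (α := G)), ← sum_mul_sum, ← map_sum, hg,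
    Complex.mul_conj']
  simp

end FrameKernel

section FrameCoefficients

variable {G X : Type*} [Fintype G] [Fintype X]

/- The values `α` (diagonal) and `β` (off-diagonal) of `frameKernel` under a 2-transitive action,
solved from its trace and its total sum. -/

variable (G) in
noncomputable def frameDiag (f : EuclideanSpace ℂ X) : ℝ :=
  Fintype.card G * ‖f‖ ^ 2 / Fintype.card X

variable (G) in
noncomputable def frameOffDiag (f : EuclideanSpace ℂ X) : ℝ :=
  Fintype.card G * (‖∑ x, f x‖ ^ 2 - ‖f‖ ^ 2) / (Fintype.card X * (Fintype.card X - 1))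

theorem frameDiag_pos [Nonempty G] {f : EuclideanSpace ℂ X} (hf : f ≠ 0) :
    0 < frameDiag G f := by
  have : Nonempty X := by
    by_contra hX
    rw [not_nonempty_iff] at hX
    exact hf (Subsingleton.elim _ _)
  have : 0 < ‖f‖ := norm_pos_iff.mpr hf
  unfold frameDiag
  positivity

theorem frameOffDiag_eq_zero_iff [Nonempty G] (hcard : 2 ≤ Fintype.card X)
    (f : EuclideanSpace ℂ X) : frameOffDiag G f = 0 ↔ ‖∑ x, f x‖ ^ 2 = ‖f‖ ^ 2 := by
  have hn : (2 : ℝ) ≤ Fintype.card X := by exact_mod_cast hcard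
  have hden : (Fintype.card X : ℝ) * (Fintype.card X - 1) ≠ 0 :=
    (mul_pos (by linarith) (by linarith)).ne'
  simp [frameOffDiag, hden, sub_eq_zero, Fintype.card_ne_zero]

end FrameCoefficients

section TwoTransitive

variable {G X : Type*} [Group G] [Fintype G] [Fintype X] [MulAction G X]

theorem frameKernel_eq_ite [DecidableEq X] (hcard : 2 ≤ Fintype.card X)
    (h2 : ∀ x y w z : X, x ≠ y → w ≠ z → ∃ g : G, g • x = w ∧ g • y = z)
    (f : EuclideanSpace ℂ X) (x y : X) :
    frameKernel G f x y = ((if x = y then frameDiag G f else frameOffDiag G f : ℝ) : ℂ) := by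
  obtain ⟨x₀⟩ : Nonempty X := Fintype.card_pos_iff.mp (by omega)
  obtain ⟨y₀, hy₀⟩ := Fintype.exists_ne_of_one_lt_card hcard x₀
  set a := frameKernel G f x₀ x₀
  set b := frameKernel G f x₀ y₀
  have hK : ∀ x y, frameKernel G f x y = (if x = y then a - b else 0) + b := by
    intro x y
    split_ifs with hxy
    · rw [hxy, diag_eq_of_smul_invariant (frameKernel_smul_smul f) h2 hcard y x₀]
      ring
    · rw [eq_of_ne_of_smul_invariant (frameKernel_smul_smul f) h2 hxy hy₀.symm]
      ring
  have hdiag : (Fintype.card X : ℂ) * a = (Fintype.card G * ‖f‖ ^ 2 : ℝ) := by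
    rw [← sum_frameKernel_diag]
    simp [hK]
  have htotal : (Fintype.card X : ℂ) * (a - b) + (Fintype.card X : ℂ) ^ 2 * b
      = (Fintype.card G * ‖∑ x, f x‖ ^ 2 : ℝ) := by
    rw [← sum_sum_frameKernel]
    simp [hK, sum_add_distrib]
    ring
  have hn0 : (Fintype.card X : ℂ) ≠ 0 := by exact_mod_cast (show Fintype.card X ≠ 0 by omega)
  have hn1 : (Fintype.card X : ℂ) - 1 ≠ 0 := by
    rw [sub_ne_zero]; exact_mod_cast (show Fintype.card X ≠ 1 by omega)
  push_cast at hdiag htotal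
  rw [hK]
  split_ifs
  · simp only [frameDiag, sub_add_cancel]
    push_cast
    field_simp
    linear_combination hdiag
  · simp only [frameOffDiag, zero_add]
    push_cast
    field_simp
    linear_combination htotal - hdiag

theorem sum_norm_inner_sq_eq (hcard : 2 ≤ Fintype.card X)
    (h2 : ∀ x y w z : X, x ≠ y → w ≠ z → ∃ g : G, g • x = w ∧ g • y = z)
    (f h : EuclideanSpace ℂ X) :
    ∑ g : G, ‖(inner ℂ h (WithLp.toLp 2 fun x => f (g⁻¹ • x)) : ℂ)‖ ^ 2
      = (frameDiag G f - frameOffDiag G f) * ‖h‖ ^ 2 + frameOffDiag G f * ‖∑ x, h x‖ ^ 2 := by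
  classical
  apply Complex.ofReal_injective
  simp_rw [ofReal_sum_norm_inner_sq, frameKernel_eq_ite hcard h2]
  exact sum_sum_conj_mul_mul_ite h _ _

end TwoTransitive

/-- For a 2-transitive action of a finite group `G` on a finite set `X` with `|X| ≥ 2`,
the orbit of a nonzero `f ∈ ℓ²(X)` under the permutation representation is a tight frame
iff `|Σ_x f_x|² = Σ_x |f_x|²`. -/
theorem two_transitive_orbit_tight_frame_iff
    {G X : Type*} [Group G] [Fintype G] [Fintype X] [MulAction G X]
    (hcard : 2 ≤ Fintype.card X)
    (h2 : ∀ x y w z : X, x ≠ y → w ≠ z → ∃ g : G, g • x = w ∧ g • y = z)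
    (f : EuclideanSpace ℂ X) (hf : f ≠ 0) :
    (∃ A : ℝ, 0 < A ∧ ∀ h : EuclideanSpace ℂ X,
        ∑ g : G, ‖(inner ℂ h (WithLp.toLp 2 (fun x => f (g⁻¹ • x)) : EuclideanSpace ℂ X) : ℂ)‖ ^ 2
          = A * ‖h‖ ^ 2)
      ↔ ‖∑ x : X, f x‖ ^ 2 = ∑ x : X, ‖f x‖ ^ 2 := by
  have hoff := frameOffDiag_eq_zero_iff (G := G) hcard f
  simp_rw [sum_norm_inner_sq_eq hcard h2 f]
  rw [exists_forall_eq_mul_norm_sq_iff hcard, hoff, ← EuclideanSpace.norm_sq_eq]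
  refine and_iff_right_of_imp fun hsum => ?_
  rw [hoff.mpr hsum, sub_zero]
  exact frameDiag_pos hf
end

section
/- Let K be a finite abelian group, ρ a unitary representation of K on a finite-dimensional Hilbert space H, and f ∈ H. For each character α ∈ K̂ set [f,f](α) = (1/|K|) Σ_{ξ∈K} ⟨f, ρ(ξ)f⟩ conj(α(ξ)). Let 0 < A ≤ B. Then the orbit {ρ(ξ)f}_{ξ∈K} satisfies |K|·A·‖g‖² ≤ Σ_{ξ∈K}|⟨g,ρ(ξ)f⟩|² ≤ |K|·B·‖g‖² for all g in the cyclic subspace span{ρ(ξ)f : ξ ∈ K}, i.e. it is a frame for that subspace with frame bounds A·|K| and B·|K|, if and only if for every α ∈ K̂, either [f,f](α) = 0 or A ≤ [f,f](α) ≤ B. -/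
open scoped ComplexOrder

set_option linter.unusedSectionVars false
section BF
variable {K : Type*} [CommGroup K] [Fintype K]
variable {H : Type*} [NormedAddCommGroup H] [InnerProductSpace ℂ H]

-- character basics
lemma bf_norm_one (α : K →* ℂ) (ξ : K) : ‖α ξ‖ = 1 := by
  refine Complex.norm_eq_one_of_pow_eq_one (n := Fintype.card K) ?_ Fintype.card_ne_zero
  rw [← map_pow, pow_card_eq_one, map_one]

lemma bf_ne_zero (α : K →* ℂ) (ξ : K) : α ξ ≠ 0 := by
  intro h; have := bf_norm_one α ξ; rw [h] at this; simp at this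

lemma bf_conj (α : K →* ℂ) (ξ : K) : (starRingEnd ℂ) (α ξ) = (α ξ)⁻¹ :=
  (Complex.inv_eq_conj (bf_norm_one α ξ)).symm

lemma bf_conj_inv (α : K →* ℂ) (ξ : K) : (starRingEnd ℂ) (α ξ) = α ξ⁻¹ := by
  rw [bf_conj]
  have : α ξ * α ξ⁻¹ = 1 := by rw [← map_mul]; simp
  field_simp [bf_ne_zero α ξ] at this ⊢
  exact this.symm


variable (ρ : K →* (H ≃ₗᵢ[ℂ] H)) (f : H)

lemma bf_inner_rho (ξ η : K) (x y : H) :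
    (inner ℂ (ρ ξ x) (ρ η y) : ℂ) = inner ℂ x (ρ (ξ⁻¹ * η) y) := by
  have h := (ρ ξ⁻¹).inner_map_map (𝕜 := ℂ) (ρ ξ x) (ρ η y)
  rw [← h]
  congr 1
  · have : (ρ ξ⁻¹) ((ρ ξ) x) = (ρ (ξ⁻¹ * ξ)) x := by
      rw [map_mul]; rfl
    rw [this]; simp
  · have : (ρ ξ⁻¹) ((ρ η) y) = (ρ (ξ⁻¹ * η)) y := by
      rw [map_mul]; rfl
    rw [this]

noncomputable def bfF (α : K →* ℂ) : H := ∑ ξ : K, (starRingEnd ℂ) (α ξ) • (ρ ξ f : H)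

noncomputable def bfb (α : K →* ℂ) : ℂ :=
  ∑ ξ : K, (inner ℂ f (ρ ξ f) : ℂ) * (starRingEnd ℂ) (α ξ)

lemma bfF_def (α : K →* ℂ) : bfF ρ f α = ∑ ξ : K, (starRingEnd ℂ) (α ξ) • (ρ ξ f : H) := rfl

lemma bf_inner_F_rho (α : K →* ℂ) (ξ : K) :
    (inner ℂ (bfF ρ f α) (ρ ξ f) : ℂ) = α ξ * bfb ρ f α := by
  rw [bfF_def, sum_inner]
  simp only [inner_smul_left, Complex.conj_conj, bf_inner_rho]
  rw [← Equiv.sum_comp (Equiv.mulLeft ξ) (fun η => α η * (inner ℂ f (ρ (η⁻¹ * ξ) f) : ℂ))]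
  have step2 : ∀ σ : K, α ((Equiv.mulLeft ξ) σ) * (inner ℂ f (ρ (((Equiv.mulLeft ξ) σ)⁻¹ * ξ) f) : ℂ)
      = α ξ * (α σ * (inner ℂ f (ρ σ⁻¹ f) : ℂ)) := by
    intro σ
    have harg : ((Equiv.mulLeft ξ) σ)⁻¹ * ξ = σ⁻¹ := by
      simp [Equiv.coe_mulLeft]
    rw [harg, Equiv.coe_mulLeft, map_mul]; ring
  rw [Finset.sum_congr rfl fun σ _ => step2 σ, ← Finset.mul_sum]
  congr 1
  rw [← Equiv.sum_comp (Equiv.inv K) (fun σ => α σ * (inner ℂ f (ρ σ⁻¹ f) : ℂ)), bfb]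
  simp only [Equiv.inv_apply, inv_inv]
  exact Finset.sum_congr rfl fun σ _ => by rw [← bf_conj_inv, mul_comm]

lemma bf_inner_F_F (β γ : K →* ℂ) :
    (inner ℂ (bfF ρ f β) (bfF ρ f γ) : ℂ)
      = (∑ ξ : K, β ξ * (starRingEnd ℂ) (γ ξ)) * bfb ρ f β := by
  conv_lhs => rw [bfF_def ρ f γ, inner_sum]
  simp only [inner_smul_right, bf_inner_F_rho]
  rw [Finset.sum_mul]
  exact Finset.sum_congr rfl fun ξ _ => by ring

lemma bf_ortho {β γ : K →* ℂ} (h : β ≠ γ) :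
    ∑ ξ : K, β ξ * (starRingEnd ℂ) (γ ξ) = 0 := by
  obtain ⟨η, hη⟩ : ∃ η, β η ≠ γ η := by
    by_contra hc; push_neg at hc; exact h (MonoidHom.ext hc)
  set S := ∑ ξ : K, β ξ * (starRingEnd ℂ) (γ ξ) with hS
  have key : β η * (starRingEnd ℂ) (γ η) * S = S := by
    rw [hS, Finset.mul_sum]
    rw [← Equiv.sum_comp (Equiv.mulLeft η) (fun ξ => β ξ * (starRingEnd ℂ) (γ ξ))]
    refine Finset.sum_congr rfl fun ξ _ => ?_
    simp only [Equiv.coe_mulLeft, map_mul]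
    ring
  have hne : β η * (starRingEnd ℂ) (γ η) ≠ 1 := by
    rw [bf_conj]
    intro hc
    apply hη
    field_simp at hc
    exact div_eq_one_iff_eq (bf_ne_zero γ η) |>.mp hc
  by_contra hS0
  have hz : (β η * (starRingEnd ℂ) (γ η) - 1) * S = 0 := by rw [sub_mul, key]; ring
  rcases mul_eq_zero.mp hz with h1 | h1
  · exact hne (sub_eq_zero.mp h1)
  · exact hS0 h1

lemma bf_complete [Fintype (K →* ℂˣ)] {ξ : K} (h : ξ ≠ 1) :
    ∑ β : K →* ℂˣ, ((β ξ : ℂˣ) : ℂ) = 0 := by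
  have : NeZero ((Monoid.exponent K : ℂ)) := by
    refine ⟨?_⟩
    exact_mod_cast Nat.cast_ne_zero.mpr (Monoid.exponent_ne_zero_of_finite (G := K))
  obtain ⟨γ, hγ⟩ := CommGroup.exists_apply_ne_one_of_hasEnoughRootsOfUnity K ℂ h
  set S := ∑ β : K →* ℂˣ, ((β ξ : ℂˣ) : ℂ) with hS
  have key : ((γ ξ : ℂˣ) : ℂ) * S = S := by
    rw [hS, Finset.mul_sum]
    rw [← Equiv.sum_comp (Equiv.mulLeft γ) (fun β : K →* ℂˣ => ((β ξ : ℂˣ) : ℂ))]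
    refine Finset.sum_congr rfl fun β _ => ?_
    simp [Equiv.coe_mulLeft]
  have hne : ((γ ξ : ℂˣ) : ℂ) ≠ 1 := by
    intro hc; exact hγ (Units.ext hc)
  by_contra hS0
  have hz : (((γ ξ : ℂˣ) : ℂ) - 1) * S = 0 := by rw [sub_mul, key]; ring
  rcases mul_eq_zero.mp hz with h1 | h1
  · exact hne (sub_eq_zero.mp h1)
  · exact hS0 h1

lemma bf_card [Fintype (K →* ℂˣ)] : Fintype.card (K →* ℂˣ) = Fintype.card K := by
  have : NeZero ((Monoid.exponent K : ℂ)) := by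
    refine ⟨?_⟩
    exact_mod_cast Nat.cast_ne_zero.mpr (Monoid.exponent_ne_zero_of_finite (G := K))
  obtain ⟨e⟩ := CommGroup.monoidHom_mulEquiv_of_hasEnoughRootsOfUnity K ℂ
  exact Fintype.card_congr e.toEquiv

lemma bf_b_real (α : K →* ℂ) :
    bfb ρ f α = ((‖bfF ρ f α‖ ^ 2 / (Fintype.card K : ℝ) : ℝ) : ℂ) := by
  have h := bf_inner_F_F ρ f α α
  have h2 : ∑ ξ : K, α ξ * (starRingEnd ℂ) (α ξ) = (Fintype.card K : ℂ) := by
    have he : ∀ ξ : K, α ξ * (starRingEnd ℂ) (α ξ) = 1 := fun ξ => by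
      rw [Complex.mul_conj, Complex.normSq_eq_norm_sq, bf_norm_one]
      norm_num
    rw [Finset.sum_congr rfl fun ξ _ => he ξ]
    simp [Finset.card_univ]
  rw [inner_self_eq_norm_sq_to_K, h2] at h
  have hn : (Fintype.card K : ℂ) ≠ 0 := by
    exact_mod_cast Nat.cast_ne_zero.mpr Fintype.card_ne_zero
  field_simp
  rw [mul_comm] at h
  push_cast
  rw [eq_div_iff hn]
  exact_mod_cast h.symm

lemma bf_conj_mul (z : ℂ) : (starRingEnd ℂ) z * z = ((‖z‖ ^ 2 : ℝ) : ℂ) := by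
  rw [← Complex.normSq_eq_conj_mul_self, Complex.normSq_eq_norm_sq]

lemma bf_sum_self (α : K →* ℂ) :
    ∑ ξ : K, α ξ * (starRingEnd ℂ) (α ξ) = (Fintype.card K : ℂ) := by
  have he : ∀ ξ : K, α ξ * (starRingEnd ℂ) (α ξ) = 1 := fun ξ => by
    rw [Complex.mul_conj, Complex.normSq_eq_norm_sq, bf_norm_one]
    norm_num
  rw [Finset.sum_congr rfl fun ξ _ => he ξ]
  simp [Finset.card_univ]

lemma bf_mem_span (α : K →* ℂ) :
    bfF ρ f α ∈ Submodule.span ℂ (Set.range fun ξ : K => (ρ ξ f : H)) := by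
  rw [bfF_def]
  exact Submodule.sum_mem _ fun ξ _ => Submodule.smul_mem _ _ (Submodule.subset_span ⟨ξ, rfl⟩)

end BF

open scoped ComplexOrder

/-- Bracket characterization of frames generated by a unitary representation of a finite
abelian group: the orbit of `f` is a frame for its cyclic span with (continuous) bounds
`A, B` iff each bracket value `[f,f](α)` is either `0` or lies in `[A, B]`. -/
theorem bracket_frame_characterization
    {K : Type*} [CommGroup K] [Fintype K]
    {H : Type*} [NormedAddCommGroup H] [InnerProductSpace ℂ H] [FiniteDimensional ℂ H]
    (ρ : K →* (H ≃ₗᵢ[ℂ] H)) (f : H)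
    (A B : ℝ) (hA : 0 < A) (hAB : A ≤ B) :
    (∀ g ∈ Submodule.span ℂ (Set.range fun ξ : K => (ρ ξ f : H)),
        (Fintype.card K : ℝ) * A * ‖g‖ ^ 2 ≤ ∑ ξ : K, ‖(inner ℂ g (ρ ξ f) : ℂ)‖ ^ 2
        ∧ ∑ ξ : K, ‖(inner ℂ g (ρ ξ f) : ℂ)‖ ^ 2 ≤ (Fintype.card K : ℝ) * B * ‖g‖ ^ 2)
      ↔ (∀ α : K →* ℂ,
          (∑ ξ : K, (inner ℂ f (ρ ξ f) : ℂ) * (starRingEnd ℂ) (α ξ)) / (Fintype.card K : ℂ) = 0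
          ∨ ((A : ℂ) ≤ (∑ ξ : K, (inner ℂ f (ρ ξ f) : ℂ) * (starRingEnd ℂ) (α ξ)) / (Fintype.card K : ℂ)
            ∧ (∑ ξ : K, (inner ℂ f (ρ ξ f) : ℂ) * (starRingEnd ℂ) (α ξ)) / (Fintype.card K : ℂ) ≤ (B : ℂ))) := by
  have hn0 : (0 : ℝ) < (Fintype.card K : ℝ) := by exact_mod_cast Fintype.card_pos
  have hnC : (Fintype.card K : ℂ) ≠ 0 := by
    exact_mod_cast Nat.cast_ne_zero.mpr Fintype.card_ne_zero
  constructor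
  · intro hfr α
    have hsum : (∑ ξ : K, (inner ℂ f (ρ ξ f) : ℂ) * (starRingEnd ℂ) (α ξ)) = bfb ρ f α := rfl
    rw [hsum]
    set s : ℝ := ‖bfF ρ f α‖ ^ 2 / (Fintype.card K : ℝ) with hs
    have hb : bfb ρ f α = (s : ℂ) := bf_b_real ρ f α
    have hs0 : 0 ≤ s := by positivity
    by_cases hF : bfF ρ f α = 0
    · left
      rw [hb, hs, hF]
      simp
    · right
      obtain ⟨h1, h2⟩ := hfr _ (bf_mem_span ρ f α)
      have hQ : ∑ ξ : K, ‖(inner ℂ (bfF ρ f α) (ρ ξ f) : ℂ)‖ ^ 2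
          = (Fintype.card K : ℝ) * s ^ 2 := by
        have he : ∀ ξ : K, ‖(inner ℂ (bfF ρ f α) (ρ ξ f) : ℂ)‖ ^ 2 = s ^ 2 := fun ξ => by
          rw [bf_inner_F_rho, norm_mul, bf_norm_one, hb, Complex.norm_real,
            Real.norm_of_nonneg hs0, one_mul]
        rw [Finset.sum_congr rfl fun ξ _ => he ξ]
        simp [Finset.card_univ, mul_comm]
      have hg2 : ‖bfF ρ f α‖ ^ 2 = (Fintype.card K : ℝ) * s := by
        rw [hs]; field_simp
      have hspos : 0 < s := by
        rw [hs]
        have : 0 < ‖bfF ρ f α‖ := norm_pos_iff.mpr hF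
        positivity
      rw [hQ, hg2] at h1 h2
      have k1 : A * (Fintype.card K : ℝ) ≤ s := by
        have h1' : (Fintype.card K : ℝ) * s * (A * (Fintype.card K : ℝ))
            ≤ (Fintype.card K : ℝ) * s * s := by nlinarith [h1]
        exact le_of_mul_le_mul_left h1' (by positivity)
      have k2 : s ≤ B * (Fintype.card K : ℝ) := by
        have h2' : (Fintype.card K : ℝ) * s * s
            ≤ (Fintype.card K : ℝ) * s * (B * (Fintype.card K : ℝ)) := by nlinarith [h2]
        exact le_of_mul_le_mul_left h2' (by positivity)
      have hA' : A ≤ s / (Fintype.card K : ℝ) := by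
        rw [le_div_iff₀ hn0]; linarith
      have hB' : s / (Fintype.card K : ℝ) ≤ B := by
        rw [div_le_iff₀ hn0]; linarith
      have hcast : bfb ρ f α / (Fintype.card K : ℂ) = ((s / (Fintype.card K : ℝ) : ℝ) : ℂ) := by
        rw [hb]; push_cast; ring
      rw [hcast]
      exact ⟨Complex.real_le_real.mpr hA', Complex.real_le_real.mpr hB'⟩
  · intro hyp g hg
    classical
    have hEx : NeZero ((Monoid.exponent K : ℂ)) :=
      ⟨by exact_mod_cast Nat.cast_ne_zero.mpr (Monoid.exponent_ne_zero_of_finite (G := K))⟩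
    have hfinD : Finite (K →* ℂˣ) := by
      obtain ⟨e⟩ := CommGroup.monoidHom_mulEquiv_of_hasEnoughRootsOfUnity K ℂ
      exact Finite.of_equiv K e.symm.toEquiv
    have : Fintype (K →* ℂˣ) := Fintype.ofFinite _
    set Ach : (K →* ℂˣ) → (K →* ℂ) := fun β => (Units.coeHom ℂ).comp β with hAch
    have hAcoe : ∀ (β : K →* ℂˣ) (ξ : K), Ach β ξ = ((β ξ : ℂˣ) : ℂ) := fun β ξ => rfl
    have hAinj : ∀ {β γ : K →* ℂˣ}, β ≠ γ → Ach β ≠ Ach γ := by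
      intro β γ hne hc
      exact hne (MonoidHom.ext fun ξ => Units.ext (by
        rw [← hAcoe, ← hAcoe, hc]))
    have hpair : ∀ β γ : K →* ℂˣ,
        ∑ ξ : K, Ach γ ξ * (starRingEnd ℂ) (Ach β ξ)
          = if γ = β then (Fintype.card K : ℂ) else 0 := by
      intro β γ
      by_cases h : γ = β
      · subst h; simp [bf_sum_self]
      · simp only [h, if_false]; exact bf_ortho (hAinj h)
    have hrho : ∀ η : K,
        ∑ β : K →* ℂˣ, ((β η : ℂˣ) : ℂ) • bfF ρ f (Ach β)
          = (Fintype.card K : ℂ) • (ρ η f : H) := by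
      intro η
      have hstep : ∀ β : K →* ℂˣ, ((β η : ℂˣ) : ℂ) • bfF ρ f (Ach β)
          = ∑ ξ : K, ((β (η * ξ⁻¹) : ℂˣ) : ℂ) • (ρ ξ f : H) := by
        intro β
        rw [bfF_def, Finset.smul_sum]
        refine Finset.sum_congr rfl fun ξ _ => ?_
        rw [smul_smul]
        congr 1
        rw [bf_conj_inv]
        simp only [hAcoe]
        rw [map_mul, Units.val_mul]
      rw [Finset.sum_congr rfl fun β _ => hstep β, Finset.sum_comm]
      have hin : ∀ ξ : K, (∑ β : K →* ℂˣ, ((β (η * ξ⁻¹) : ℂˣ) : ℂ))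
          = if ξ = η then (Fintype.card K : ℂ) else 0 := by
        intro ξ
        by_cases h : ξ = η
        · subst h
          simp only [mul_inv_cancel, if_true, map_one, Units.val_one]
          rw [Finset.sum_const, Finset.card_univ, bf_card, nsmul_eq_mul, mul_one]
        · have hne : η * ξ⁻¹ ≠ 1 := by
            intro hc
            exact h (by rwa [mul_inv_eq_one, eq_comm] at hc)
          simp only [h, if_false]
          exact bf_complete hne
      rw [Finset.sum_congr rfl fun ξ _ => by rw [← Finset.sum_smul, hin ξ]]
      simp only [ite_smul, zero_smul, Finset.sum_ite_eq' Finset.univ η, Finset.mem_univ, if_true]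
    obtain ⟨d, hd⟩ := Submodule.mem_span_range_iff_exists_fun ℂ |>.mp hg
    set c : (K →* ℂˣ) → ℂ :=
      fun β => (Fintype.card K : ℂ)⁻¹ * ∑ ξ : K, d ξ * ((β ξ : ℂˣ) : ℂ) with hc
    have hgc : g = ∑ β : K →* ℂˣ, c β • bfF ρ f (Ach β) := by
      rw [← hd]
      have expand : ∀ β : K →* ℂˣ, c β • bfF ρ f (Ach β)
          = ∑ ξ : K, ((Fintype.card K : ℂ)⁻¹ * d ξ)
              • (((β ξ : ℂˣ) : ℂ) • bfF ρ f (Ach β)) := by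
        intro β
        have hcb : c β = (Fintype.card K : ℂ)⁻¹ * ∑ ξ : K, d ξ * ((β ξ : ℂˣ) : ℂ) := rfl
        rw [hcb, Finset.mul_sum, Finset.sum_smul]
        refine Finset.sum_congr rfl fun ξ _ => ?_
        rw [smul_smul]
        congr 1
        ring
      rw [Finset.sum_congr rfl fun β _ => expand β, Finset.sum_comm]
      refine Finset.sum_congr rfl fun ξ _ => ?_
      rw [← Finset.smul_sum, hrho ξ, smul_smul]
      congr 1
      field_simp
    set s : (K →* ℂˣ) → ℝ :=
      fun β => ‖bfF ρ f (Ach β)‖ ^ 2 / (Fintype.card K : ℝ) with hsdef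
    have hb : ∀ β : K →* ℂˣ, bfb ρ f (Ach β) = ((s β : ℝ) : ℂ) := fun β => bf_b_real ρ f (Ach β)
    have hs0 : ∀ β : K →* ℂˣ, 0 ≤ s β := fun β => by rw [hsdef]; positivity
    have hsreal : ∀ β : K →* ℂˣ, s β = 0 ∨ (A * (Fintype.card K : ℝ) ≤ s β ∧ s β ≤ B * (Fintype.card K : ℝ)) := by
      intro β
      rcases hyp (Ach β) with h0 | ⟨hl, hr⟩
      · left
        have : bfb ρ f (Ach β) = 0 := by
          field_simp at h0
          rw [mul_zero] at h0
          exact h0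
        rw [hb β] at this
        exact_mod_cast this
      · right
        have hsum : (∑ ξ : K, (inner ℂ f (ρ ξ f) : ℂ) * (starRingEnd ℂ) (Ach β ξ)) = bfb ρ f (Ach β) := rfl
        rw [hsum, hb β] at hl hr
        have hcast : ((s β : ℝ) : ℂ) / (Fintype.card K : ℂ) = ((s β / (Fintype.card K : ℝ) : ℝ) : ℂ) := by
          push_cast; ring
        rw [hcast] at hl hr
        have hl' := Complex.real_le_real.mp hl
        have hr' := Complex.real_le_real.mp hr
        rw [le_div_iff₀ hn0] at hl'
        rw [div_le_iff₀ hn0] at hr'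
        exact ⟨hl', hr'⟩
    -- inner products
    have hip : ∀ ξ : K, (inner ℂ g (ρ ξ f) : ℂ)
        = ∑ β : K →* ℂˣ, ((starRingEnd ℂ) (c β) * ((s β : ℝ) : ℂ)) * Ach β ξ := by
      intro ξ
      rw [hgc, sum_inner]
      refine Finset.sum_congr rfl fun β _ => ?_
      rw [inner_smul_left, bf_inner_F_rho, hb β]
      ring
    -- norm of g
    have hN : ‖g‖ ^ 2 = ∑ β : K →* ℂˣ, ‖c β‖ ^ 2 * ((Fintype.card K : ℝ) * s β) := by
      have hgg : (inner ℂ g g : ℂ)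
          = ((∑ β : K →* ℂˣ, ‖c β‖ ^ 2 * ((Fintype.card K : ℝ) * s β) : ℝ) : ℂ) := by
        conv_lhs => rw [hgc]
        rw [sum_inner]
        have hterm : ∀ β : K →* ℂˣ,
            (inner ℂ (c β • bfF ρ f (Ach β)) (∑ γ : K →* ℂˣ, c γ • bfF ρ f (Ach γ)) : ℂ)
              = ((‖c β‖ ^ 2 * ((Fintype.card K : ℝ) * s β) : ℝ) : ℂ) := by
          intro β
          rw [inner_sum]
          have h1 : ∀ γ : K →* ℂˣ, (inner ℂ (c β • bfF ρ f (Ach β)) (c γ • bfF ρ f (Ach γ)) : ℂ)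
              = (if γ = β then (Fintype.card K : ℂ) else 0)
                  * ((starRingEnd ℂ) (c β) * c γ * bfb ρ f (Ach β)) := by
            intro γ
            rw [inner_smul_left, inner_smul_right, bf_inner_F_F]
            have h2 : ∑ ξ : K, Ach β ξ * (starRingEnd ℂ) (Ach γ ξ)
                = if β = γ then (Fintype.card K : ℂ) else 0 := hpair γ β
            rw [h2]
            by_cases h : β = γ
            · subst h; simp; ring
            · simp [h, Ne.symm h]
          rw [Finset.sum_congr rfl fun γ _ => h1 γ]
          have hite : ∀ γ : K →* ℂˣ, (if γ = β then (Fintype.card K : ℂ) else 0)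
                * ((starRingEnd ℂ) (c β) * c γ * bfb ρ f (Ach β))
              = if γ = β then (Fintype.card K : ℂ)
                  * ((starRingEnd ℂ) (c β) * c γ * bfb ρ f (Ach β)) else 0 := by
            intro γ; by_cases h : γ = β
            · subst h; simp
            · simp [h]
          rw [Finset.sum_congr rfl fun γ _ => hite γ, Finset.sum_ite_eq' Finset.univ β]
          simp only [Finset.mem_univ, if_true]
          rw [hb β]
          have hcc : (starRingEnd ℂ) (c β) * c β = ((‖c β‖ ^ 2 : ℝ) : ℂ) := bf_conj_mul (c β)
          have hre : (Fintype.card K : ℂ) * ((starRingEnd ℂ) (c β) * c β * ((s β : ℝ) : ℂ))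
              = (Fintype.card K : ℂ) * (((‖c β‖ ^ 2 : ℝ) : ℂ) * ((s β : ℝ) : ℂ)) := by
            rw [← hcc]
          rw [hre]
          push_cast
          try ring
        rw [Finset.sum_congr rfl fun β _ => hterm β]
        push_cast
        ring
      have := inner_self_eq_norm_sq (𝕜 := ℂ) g
      rw [hgg] at this
      rw [← this]
      exact RCLike.ofReal_re _
    -- sum of squared inner products
    have hQ : ∑ ξ : K, ‖(inner ℂ g (ρ ξ f) : ℂ)‖ ^ 2
        = ∑ β : K →* ℂˣ, (Fintype.card K : ℝ) * (‖c β‖ ^ 2 * (s β) ^ 2) := by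
      have hT : ∑ ξ : K, ((inner ℂ g (ρ ξ f) : ℂ) * (starRingEnd ℂ) (inner ℂ g (ρ ξ f) : ℂ))
          = ((∑ β : K →* ℂˣ, (Fintype.card K : ℝ) * (‖c β‖ ^ 2 * (s β) ^ 2) : ℝ) : ℂ) := by
        have hexp : ∀ ξ : K, (inner ℂ g (ρ ξ f) : ℂ) * (starRingEnd ℂ) (inner ℂ g (ρ ξ f) : ℂ)
            = ∑ β : K →* ℂˣ, ∑ γ : K →* ℂˣ,
                (((starRingEnd ℂ) (c β) * ((s β : ℝ) : ℂ)) * (c γ * ((s γ : ℝ) : ℂ)))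
                  * (Ach β ξ * (starRingEnd ℂ) (Ach γ ξ)) := by
          intro ξ
          rw [hip ξ, map_sum, Finset.sum_mul_sum]
          refine Finset.sum_congr rfl fun β _ => Finset.sum_congr rfl fun γ _ => ?_
          simp only [map_mul, Complex.conj_conj, Complex.conj_ofReal]
          ring
        rw [Finset.sum_congr rfl fun ξ _ => hexp ξ, Finset.sum_comm]
        rw [Finset.sum_congr rfl fun β _ => Finset.sum_comm]
        have hdiag : ∀ β : K →* ℂˣ,
            (∑ γ : K →* ℂˣ, ∑ ξ : K,
              (((starRingEnd ℂ) (c β) * ((s β : ℝ) : ℂ)) * (c γ * ((s γ : ℝ) : ℂ)))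
                * (Ach β ξ * (starRingEnd ℂ) (Ach γ ξ)))
              = (((Fintype.card K : ℝ) * (‖c β‖ ^ 2 * (s β) ^ 2) : ℝ) : ℂ) := by
          intro β
          have hγ : ∀ γ : K →* ℂˣ,
              (∑ ξ : K, (((starRingEnd ℂ) (c β) * ((s β : ℝ) : ℂ)) * (c γ * ((s γ : ℝ) : ℂ)))
                * (Ach β ξ * (starRingEnd ℂ) (Ach γ ξ)))
              = (if β = γ then (Fintype.card K : ℂ) else 0)
                  * (((starRingEnd ℂ) (c β) * ((s β : ℝ) : ℂ)) * (c γ * ((s γ : ℝ) : ℂ))) := by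
            intro γ
            rw [← Finset.mul_sum, hpair γ β]
            ring
          rw [Finset.sum_congr rfl fun γ _ => hγ γ]
          have hite : ∀ γ : K →* ℂˣ, (if β = γ then (Fintype.card K : ℂ) else 0)
                  * (((starRingEnd ℂ) (c β) * ((s β : ℝ) : ℂ)) * (c γ * ((s γ : ℝ) : ℂ)))
              = if γ = β then (Fintype.card K : ℂ)
                  * (((starRingEnd ℂ) (c β) * ((s β : ℝ) : ℂ)) * (c γ * ((s γ : ℝ) : ℂ))) else 0 := by
            intro γ
            by_cases h : β = γ
            · subst h; simp
            · simp [h, Ne.symm h]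
          rw [Finset.sum_congr rfl fun γ _ => hite γ]
          rw [Finset.sum_ite_eq' Finset.univ β]
          simp only [Finset.mem_univ, if_true]
          have hcc : (starRingEnd ℂ) (c β) * c β = ((‖c β‖ ^ 2 : ℝ) : ℂ) := bf_conj_mul (c β)
          have hre2 : (Fintype.card K : ℂ)
                * (((starRingEnd ℂ) (c β) * ((s β : ℝ) : ℂ)) * (c β * ((s β : ℝ) : ℂ)))
              = (Fintype.card K : ℂ)
                * (((‖c β‖ ^ 2 : ℝ) : ℂ) * (((s β : ℝ) : ℂ) * ((s β : ℝ) : ℂ))) := by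
            rw [← hcc]; ring
          rw [hre2]
          push_cast
          ring
        rw [Finset.sum_congr rfl fun β _ => hdiag β]
        push_cast
        ring
      have hre : ∀ ξ : K, ‖(inner ℂ g (ρ ξ f) : ℂ)‖ ^ 2
          = ((inner ℂ g (ρ ξ f) : ℂ) * (starRingEnd ℂ) (inner ℂ g (ρ ξ f) : ℂ)).re := by
        intro ξ
        rw [Complex.mul_conj, Complex.normSq_eq_norm_sq,
          Complex.ofReal_re]
      rw [Finset.sum_congr rfl fun ξ _ => hre ξ, ← Complex.re_sum, hT, Complex.ofReal_re]
    constructor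
    · rw [hQ, hN, Finset.mul_sum]
      refine Finset.sum_le_sum fun β _ => ?_
      rcases hsreal β with h0 | ⟨hl, hr⟩
      · simp [h0]
      · have h1 : 0 ≤ ‖c β‖ ^ 2 := sq_nonneg _
        nlinarith [hs0 β, mul_le_mul_of_nonneg_left hl
          (show (0:ℝ) ≤ (Fintype.card K : ℝ) * ‖c β‖ ^ 2 * s β by positivity)]
    · rw [hQ, hN, Finset.mul_sum]
      refine Finset.sum_le_sum fun β _ => ?_
      rcases hsreal β with h0 | ⟨hl, hr⟩
      · simp [h0]
      · have h1 : 0 ≤ ‖c β‖ ^ 2 := sq_nonneg _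
        nlinarith [hs0 β, mul_le_mul_of_nonneg_left hr
          (show (0:ℝ) ≤ (Fintype.card K : ℝ) * ‖c β‖ ^ 2 * s β by positivity)]
end

section
/- Let K be a compact group and ρ a unitary representation on a separable Hilbert space H. If there exists f ∈ H and 0 < A ≤ B such that A‖g‖² ≤ ∫_K |⟨g, ρ(ξ)f⟩|² dξ ≤ B‖g‖² for all g ∈ H (i.e., the orbit of f is a continuous frame for H), then H is finite-dimensional. -/
/-!
If `e₁, …, eₙ` is orthonormal, the lower frame bound gives `n * A ≤ ∑ₖ ∫ |⟨eₖ, ρ(ξ) f⟩|² dξ`,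
while Bessel's inequality applied pointwise to `ρ(ξ) f`, whose norm is `‖f‖`, bounds the same
sum by `‖f‖²`. Hence no orthonormal family has more than `‖f‖² / A` elements, whereas an
infinite-dimensional space contains orthonormal families of every finite size (Gram–Schmidt).
-/

open MeasureTheory

theorem exists_orthonormal_fin_of_not_finiteDimensional {𝕜 E : Type*} [RCLike 𝕜]
    [NormedAddCommGroup E] [InnerProductSpace 𝕜 E] (h : ¬FiniteDimensional 𝕜 E) (n : ℕ) :
    ∃ e : Fin n → E, Orthonormal 𝕜 e := by
  have hn : (n : Cardinal) ≤ Module.rank 𝕜 E :=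
    Cardinal.natCast_lt_aleph0.le.trans (not_lt.mp (mt Module.rank_lt_aleph0_iff.mp h))
  obtain ⟨v, hv⟩ := exists_linearIndependent_of_le_rank hn
  exact ⟨InnerProductSpace.gramSchmidtNormed 𝕜 v,
    InnerProductSpace.gramSchmidtNormed_orthonormal hv⟩

theorem Orthonormal.sum_integral_norm_inner_sq_le {𝕜 E ι α : Type*} [RCLike 𝕜]
    [NormedAddCommGroup E] [InnerProductSpace 𝕜 E] [MeasurableSpace α] {μ : Measure α}
    {e : ι → E} (he : Orthonormal 𝕜 e) (s : Finset ι) {v : α → E}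
    (hv : MemLp v 2 μ) :
    ∑ i ∈ s, ∫ x, ‖(inner 𝕜 (e i) (v x) : 𝕜)‖ ^ 2 ∂μ ≤ ∫ x, ‖v x‖ ^ 2 ∂μ := by
  have hint : ∀ i, Integrable (fun x => ‖(inner 𝕜 (e i) (v x) : 𝕜)‖ ^ 2) μ := fun i =>
    (hv.const_inner (e i)).integrable_norm_pow two_ne_zero
  rw [← integral_finsetSum s fun i _ => hint i]
  exact integral_mono (integrable_finsetSum s fun i _ => hint i)
    (hv.integrable_norm_pow two_ne_zero) fun x => he.sum_inner_products_le (v x)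

theorem continuous_frame_finite_dimensional_general
    {K : Type*} [Group K] [TopologicalSpace K]
    [SecondCountableTopology K] [MeasurableSpace K] [BorelSpace K]
    (μ : Measure K) [IsProbabilityMeasure μ]
    {H : Type*} [NormedAddCommGroup H] [InnerProductSpace ℂ H]
    (ρ : K →* (H ≃ₗᵢ[ℂ] H)) (hρ : Continuous fun p : K × H => ρ p.1 p.2)
    (f : H) (A B : ℝ) (hA : 0 < A)
    (hframe : ∀ g : H,
      A * ‖g‖ ^ 2 ≤ ∫ ξ, ‖(inner ℂ g (ρ ξ f) : ℂ)‖ ^ 2 ∂μ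
      ∧ ∫ ξ, ‖(inner ℂ g (ρ ξ f) : ℂ)‖ ^ 2 ∂μ ≤ B * ‖g‖ ^ 2) :
    FiniteDimensional ℂ H := by
  by_contra hinf
  obtain ⟨n, hn⟩ := exists_nat_gt (‖f‖ ^ 2 / A)
  obtain ⟨e, he⟩ := exists_orthonormal_fin_of_not_finiteDimensional hinf n
  have horbit : MemLp (fun ξ => ρ ξ f) 2 μ :=
    MemLp.of_bound (hρ.comp (Continuous.prodMk_left f)).aestronglyMeasurable ‖f‖
      (ae_of_all _ fun ξ => ((ρ ξ).norm_map f).le)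
  have hcard : n * A ≤ ‖f‖ ^ 2 :=
    calc n * A = ∑ k : Fin n, A * ‖e k‖ ^ 2 := by simp [he.norm_eq_one]
      _ ≤ ∑ k : Fin n, ∫ ξ, ‖(inner ℂ (e k) (ρ ξ f) : ℂ)‖ ^ 2 ∂μ :=
        Finset.sum_le_sum fun k _ => (hframe (e k)).1
      _ ≤ ∫ ξ, ‖ρ ξ f‖ ^ 2 ∂μ := he.sum_integral_norm_inner_sq_le _ horbit
      _ = ‖f‖ ^ 2 := by simp
  exact (div_lt_iff₀ hA).mp hn |>.not_ge hcard

/-- If the orbit of a vector under a unitary representation of a compact group is a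
continuous frame for the whole space, then the space is finite-dimensional. -/
theorem continuous_frame_finite_dimensional
    {K : Type*} [Group K] [TopologicalSpace K] [IsTopologicalGroup K] [CompactSpace K]
    [SecondCountableTopology K] [MeasurableSpace K] [BorelSpace K]
    (μ : Measure K) [μ.IsHaarMeasure] [IsProbabilityMeasure μ]
    {H : Type*} [NormedAddCommGroup H] [InnerProductSpace ℂ H] [CompleteSpace H]
    [TopologicalSpace.SeparableSpace H]
    (ρ : K →* (H ≃ₗᵢ[ℂ] H)) (hρ : Continuous fun p : K × H => ρ p.1 p.2)
    (f : H) (A B : ℝ) (hA : 0 < A) (hAB : A ≤ B)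
    (hframe : ∀ g : H,
      A * ‖g‖ ^ 2 ≤ ∫ ξ, ‖(inner ℂ g (ρ ξ f) : ℂ)‖ ^ 2 ∂μ
      ∧ ∫ ξ, ‖(inner ℂ g (ρ ξ f) : ℂ)‖ ^ 2 ∂μ ≤ B * ‖g‖ ^ 2) :
    FiniteDimensional ℂ H :=
  continuous_frame_finite_dimensional_general μ ρ hρ f A B hA hframe
end

section
/- Let K be a finite group and let f ∈ L²(K) be of positive type. Then the left translates {L_ξ f}_{ξ∈K} form a Parseval frame for the cyclic span ⟨f⟩ = span{L_ξ f : ξ ∈ K}, in the sense that ∫_K |⟨g, L_ξ f⟩|² dξ = ‖g‖² for all g ∈ ⟨f⟩ with respect to the normalized counting measure on K, if and only if f is a projection in the convolution algebra, i.e., f = f * f = f^*, where convolution uses the normalized Haar (counting) measure and f^*(ξ) = conj(f(ξ⁻¹)). -/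
/-- Normalized convolution on a finite group. -/
noncomputable def convF {K : Type*} [Group K] [Fintype K] (f g : K → ℂ) : K → ℂ :=
  fun ξ => (Fintype.card K : ℂ)⁻¹ * ∑ η : K, f η * g (η⁻¹ * ξ)

/-- The involution `f^*(ξ) = conj (f ξ⁻¹)`. -/
def involF {K : Type*} [Group K] (f : K → ℂ) : K → ℂ :=
  fun ξ => (starRingEnd ℂ) (f ξ⁻¹)

/-- Left translation `(L_ξ f)(η) = f (ξ⁻¹ η)`. -/
def ltF {K : Type*} [Group K] (ξ : K) (f : K → ℂ) : K → ℂ :=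
  fun η => f (ξ⁻¹ * η)

/-- Normalized `L²(K)` inner product on a finite group. -/
noncomputable def ipF {K : Type*} [Fintype K] (f g : K → ℂ) : ℂ :=
  (Fintype.card K : ℂ)⁻¹ * ∑ η : K, f η * (starRingEnd ℂ) (g η)

section Helpers

variable {K : Type*} [Group K] [Fintype K]

lemma convF_add_left (f g h : K → ℂ) : convF (f + g) h = convF f h + convF g h := by
  funext ξ; simp [convF, add_mul, Finset.sum_add_distrib, mul_add]

lemma convF_sub_left (f g h : K → ℂ) : convF (f - g) h = convF f h - convF g h := by
  funext ξ; simp [convF, sub_mul, Finset.sum_sub_distrib, mul_sub]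

lemma convF_smul_left (a : ℂ) (f h : K → ℂ) : convF (a • f) h = a • convF f h := by
  funext ξ; simp only [convF, Pi.smul_apply, smul_eq_mul, Finset.mul_sum]
  refine Finset.sum_congr rfl (fun τ _ => by ring)

lemma convF_neg_left (f h : K → ℂ) : convF (-f) h = -convF f h := by
  funext ξ; simp [convF, Finset.mul_sum]

lemma convF_ltF (ξ : K) (g h : K → ℂ) : convF (ltF ξ g) h = ltF ξ (convF g h) := by
  funext τ; unfold convF ltF
  congr 1
  refine Fintype.sum_equiv (Equiv.mulLeft ξ).symm _ _ (fun η => ?_)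
  simp [mul_assoc, mul_inv_rev]

lemma convF_assoc (g f h : K → ℂ) : convF (convF g f) h = convF g (convF f h) := by
  funext ξ
  simp only [convF, Finset.sum_mul, Finset.mul_sum]
  rw [Finset.sum_comm]
  refine Finset.sum_congr rfl (fun ζ _ => ?_)
  refine Fintype.sum_equiv (Equiv.mulLeft ζ).symm _ _ (fun τ => ?_)
  simp only [Equiv.mulLeft_symm, Equiv.coe_mulLeft, mul_inv_rev, inv_inv, mul_assoc,
    mul_inv_cancel_left, inv_mul_cancel_left]
  ring

lemma ipF_sub_left (f g h : K → ℂ) : ipF (f - g) h = ipF f h - ipF g h := by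
  simp [ipF, sub_mul, Finset.sum_sub_distrib, mul_sub]

lemma ipF_add_left (f g h : K → ℂ) : ipF (f + g) h = ipF f h + ipF g h := by
  simp [ipF, add_mul, Finset.sum_add_distrib, mul_add]

lemma ipF_smul_left (a : ℂ) (f h : K → ℂ) : ipF (a • f) h = a * ipF f h := by
  simp only [ipF, Pi.smul_apply, smul_eq_mul, Finset.mul_sum]
  refine Finset.sum_congr rfl (fun τ _ => by ring)

lemma ipF_add_right (f g h : K → ℂ) : ipF f (g + h) = ipF f g + ipF f h := by
  simp [ipF, map_add, Finset.sum_add_distrib, mul_add]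

lemma ipF_smul_right (a : ℂ) (f h : K → ℂ) :
    ipF f (a • h) = (starRingEnd ℂ) a * ipF f h := by
  simp only [ipF, Pi.smul_apply, smul_eq_mul, map_mul, Finset.mul_sum]
  refine Finset.sum_congr rfl (fun τ _ => by ring)

/-- `ipF h h` is a nonnegative real: explicitly `card⁻¹ * ∑ ‖h η‖²`. -/
lemma ipF_self (h : K → ℂ) :
    ipF h h = (((Fintype.card K : ℝ)⁻¹ * ∑ η : K, ‖h η‖ ^ 2 : ℝ) : ℂ) := by
  simp only [ipF]
  push_cast
  congr 1
  exact Finset.sum_congr rfl (fun η _ => by exact_mod_cast Complex.mul_conj' (h η))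

lemma ipF_self_eq_zero {h : K → ℂ} (hz : ipF h h = 0) : h = 0 := by
  rw [ipF_self] at hz
  have h0 : (Fintype.card K : ℝ)⁻¹ * ∑ η : K, ‖h η‖ ^ 2 = 0 := by exact_mod_cast hz
  have hc : (0:ℝ) < (Fintype.card K : ℝ)⁻¹ := by
    simp [Fintype.card_pos]
  have hsum : ∑ η : K, ‖h η‖ ^ 2 = 0 := by
    rcases mul_eq_zero.1 h0 with h1 | h1
    · exact absurd h1 (ne_of_gt hc)
    · exact h1
  funext η
  have := (Finset.sum_eq_zero_iff_of_nonneg (fun i _ => by positivity)).1 hsum η (Finset.mem_univ η)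
  have : ‖h η‖ = 0 := by nlinarith [norm_nonneg (h η)]
  simpa using this

/-- `ipF g (ltF ξ f) = (g ⋆ f)(ξ)` when `f = involF f`. -/
lemma ipF_ltF (g f : K → ℂ) (hf : f = involF f) (ξ : K) :
    ipF g (ltF ξ f) = convF g f ξ := by
  simp only [ipF, convF, ltF]
  congr 1
  refine Finset.sum_congr rfl (fun η _ => ?_)
  congr 1
  conv_rhs => rw [hf]
  simp [involF, mul_inv_rev]
/-- Right convolution by `f` is self-adjoint when `f = involF f`. -/
lemma ipF_conv_selfadj (g h f : K → ℂ) (hf : f = involF f) :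
    ipF (convF g f) h = ipF g (convF h f) := by
  simp only [ipF, convF, Finset.mul_sum, Finset.sum_mul, map_mul, map_sum, map_inv₀,
    Complex.conj_natCast]
  rw [Finset.sum_comm]
  refine Finset.sum_congr rfl (fun η _ => ?_)
  refine Finset.sum_congr rfl (fun ξ _ => ?_)
  have : (starRingEnd ℂ) (f (ξ⁻¹ * η)) = f (η⁻¹ * ξ) := by
    conv_rhs => rw [hf]
    simp [involF, mul_inv_rev]
  rw [this]; ring

/-- `g ⋆ f` lies in the span of the translates of `f`. -/
lemma conv_mem_span (g f : K → ℂ) :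
    convF g f ∈ Submodule.span ℂ (Set.range fun ξ : K => ltF ξ f) := by
  have hrep : convF g f = ∑ η : K, ((Fintype.card K : ℂ)⁻¹ * g η) • ltF η f := by
    funext ξ
    simp only [convF, Finset.sum_apply, Pi.smul_apply, ltF, smul_eq_mul, Finset.mul_sum]
    refine Finset.sum_congr rfl (fun τ _ => by ring)
  rw [hrep]
  exact Submodule.sum_mem _ (fun η _ => Submodule.smul_mem _ _
    (Submodule.subset_span ⟨η, rfl⟩))

lemma convF_zero_left (f : K → ℂ) : convF 0 f = 0 := by
  funext ξ; simp [convF]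

lemma involF_of_pos {Hσ : Type*} [NormedAddCommGroup Hσ] [InnerProductSpace ℂ Hσ]
    (σ : K →* (Hσ ≃ₗᵢ[ℂ] Hσ)) (v : Hσ) (f : K → ℂ)
    (hpos : ∀ ξ : K, f ξ = (inner ℂ v (σ ξ v) : ℂ)) : f = involF f := by
  funext ξ
  have h1 : σ ξ (σ ξ⁻¹ v) = v := by
    have h2 : σ ξ * σ ξ⁻¹ = 1 := by rw [← map_mul]; simp
    calc σ ξ (σ ξ⁻¹ v) = (σ ξ * σ ξ⁻¹) v := rfl
      _ = v := by rw [h2]; rfl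
  show f ξ = (starRingEnd ℂ) (f ξ⁻¹)
  rw [hpos ξ, hpos ξ⁻¹, inner_conj_symm,
    ← LinearIsometryEquiv.inner_map_map (σ ξ) (σ ξ⁻¹ v) v, h1]

lemma ipF_conv_pos {Hσ : Type*} [NormedAddCommGroup Hσ] [InnerProductSpace ℂ Hσ]
    (σ : K →* (Hσ ≃ₗᵢ[ℂ] Hσ)) (v : Hσ) (f : K → ℂ)
    (hpos : ∀ ξ : K, f ξ = (inner ℂ v (σ ξ v) : ℂ)) (g : K → ℂ) :
    ∃ r : ℝ, 0 ≤ r ∧ ipF (convF g f) g = (r : ℂ) := by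
  have hfval : ∀ η ξ : K, f (η⁻¹ * ξ) = (inner ℂ (σ η v) (σ ξ v) : ℂ) := by
    intro η ξ
    have h2 : σ η * σ (η⁻¹ * ξ) = σ ξ := by rw [← map_mul, mul_inv_cancel_left]
    have h1 : σ η (σ (η⁻¹ * ξ) v) = σ ξ v := by
      calc σ η (σ (η⁻¹ * ξ) v) = (σ η * σ (η⁻¹ * ξ)) v := rfl
        _ = σ ξ v := by rw [h2]
    rw [hpos, ← LinearIsometryEquiv.inner_map_map (σ η) v (σ (η⁻¹ * ξ) v), h1]
  set w : Hσ := ∑ η : K, (starRingEnd ℂ) (g η) • σ η v with hw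
  refine ⟨((Fintype.card K : ℝ)⁻¹) ^ 2 * ‖w‖ ^ 2, by positivity, ?_⟩
  have hiw : (inner ℂ w w : ℂ)
      = ∑ η : K, ∑ ξ : K, g η * ((starRingEnd ℂ) (g ξ) * (inner ℂ (σ η v) (σ ξ v) : ℂ)) := by
    rw [hw, sum_inner]
    refine Finset.sum_congr rfl (fun η _ => ?_)
    rw [inner_smul_left, inner_sum, Finset.mul_sum]
    simp only [Complex.conj_conj]
    refine Finset.sum_congr rfl (fun ξ _ => ?_)
    rw [inner_smul_right]
  have hmain : ipF (convF g f) g = ((Fintype.card K : ℂ)⁻¹) ^ 2 * (inner ℂ w w : ℂ) := by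
    rw [hiw]
    simp only [ipF, convF, Finset.sum_mul, Finset.mul_sum]
    rw [Finset.sum_comm]
    refine Finset.sum_congr rfl (fun η _ => ?_)
    refine Finset.sum_congr rfl (fun ξ _ => ?_)
    rw [hfval η ξ]; ring
  rw [hmain, inner_self_eq_norm_sq_to_K]
  push_cast
  norm_cast

end Helpers

/-- For a finite group `K` and `f ∈ L²(K)` of positive type, the translates `{L_ξ f}`
form a Parseval frame (continuous normalization) for the cyclic span of `f` iff `f` is a
projection in the convolution algebra: `f = f * f = f^*`. -/
theorem parseval_translates_iff_projection
    {K : Type*} [Group K] [Fintype K] (f : K → ℂ)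
    {Hσ : Type*} [NormedAddCommGroup Hσ] [InnerProductSpace ℂ Hσ]
    (σ : K →* (Hσ ≃ₗᵢ[ℂ] Hσ)) (v : Hσ)
    (hpos : ∀ ξ : K, f ξ = (inner ℂ v (σ ξ v) : ℂ)) :
    (∀ g ∈ Submodule.span ℂ (Set.range fun ξ : K => ltF ξ f),
        (Fintype.card K : ℝ)⁻¹ * ∑ ξ : K, ‖ipF g (ltF ξ f)‖ ^ 2
          = (Fintype.card K : ℝ)⁻¹ * ∑ η : K, ‖g η‖ ^ 2)
      ↔ (f = convF f f ∧ f = involF f) := by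
  have hinv : f = involF f := involF_of_pos σ v f hpos
  set V := Submodule.span ℂ (Set.range fun ξ : K => ltF ξ f) with hV
  have hfmem : f ∈ V := by
    have : f = ltF 1 f := by funext η; simp [ltF]
    rw [this]
    exact Submodule.subset_span ⟨1, rfl⟩
  constructor
  · -- Parseval ⇒ projection
    intro hp
    refine ⟨?_, hinv⟩
    -- isometry in inner product form
    have hiso : ∀ g ∈ V, ipF (convF g f) (convF g f) = ipF g g := by
      intro g hg
      have h1 := hp g hg
      simp only [ipF_ltF g f hinv] at h1
      rw [ipF_self, ipF_self]
      exact_mod_cast congrArg (fun r : ℝ => (r : ℂ)) h1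
    -- R² = id on V
    have hBq : ∀ g ∈ V, ipF (convF (convF g f) f - g) g = 0 := by
      intro g hg
      rw [ipF_sub_left, ipF_conv_selfadj (convF g f) g f hinv, hiso g hg, sub_self]
    have hB0 : ∀ g ∈ V, ∀ h ∈ V, ipF (convF (convF g f) f - g) h = 0 := by
      intro g hg h hh
      have hadd : ipF (convF (convF g f) f - g) h + ipF (convF (convF h f) f - h) g = 0 := by
        have h1 := hBq (g + h) (V.add_mem hg hh)
        have hBsum : convF (convF (g + h) f) f - (g + h)
            = (convF (convF g f) f - g) + (convF (convF h f) f - h) := by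
          rw [convF_add_left, convF_add_left]; abel
        rw [hBsum, ipF_add_left, ipF_add_right, ipF_add_right, hBq g hg, hBq h hh] at h1
        linear_combination h1
      have hsub : ipF (convF (convF g f) f - g) h - ipF (convF (convF h f) f - h) g = 0 := by
        have h1 := hBq (g + Complex.I • h) (V.add_mem hg (V.smul_mem _ hh))
        have hBsum : convF (convF (g + Complex.I • h) f) f - (g + Complex.I • h)
            = (convF (convF g f) f - g) + Complex.I • (convF (convF h f) f - h) := by
          rw [convF_add_left, convF_smul_left, convF_add_left, convF_smul_left]
          funext τ; simp; ring
        rw [hBsum, ipF_add_left, ipF_add_right, ipF_add_right] at h1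
        simp only [ipF_smul_left, ipF_smul_right, Complex.conj_I] at h1
        rw [hBq g hg, hBq h hh] at h1
        have h2 : -Complex.I * (ipF (convF (convF g f) f - g) h
            - ipF (convF (convF h f) f - h) g) = 0 := by linear_combination h1
        have h3 := mul_eq_zero.1 h2
        rcases h3 with h3 | h3
        · exfalso; simp at h3
        · exact h3
      linear_combination (hadd + hsub) / 2
    have hR2 : ∀ g ∈ V, convF (convF g f) f = g := by
      intro g hg
      have hBmem : convF (convF g f) f - g ∈ V :=
        V.sub_mem (conv_mem_span _ f) hg
      have := hB0 g hg _ hBmem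
      have hz := ipF_self_eq_zero this
      rwa [sub_eq_zero] at hz
    -- now use positivity
    have hfix : ∀ g ∈ V, convF g f = g := by
      intro g hg
      have hdmem : g - convF g f ∈ V := V.sub_mem hg (conv_mem_span g f)
      have hRd : convF (g - convF g f) f = -(g - convF g f) := by
        rw [convF_sub_left, hR2 g hg]; abel
      obtain ⟨r, hr0, hre⟩ := ipF_conv_pos σ v f hpos (g - convF g f)
      rw [hRd] at hre
      have hneg : ipF (-(g - convF g f)) (g - convF g f)
          = -ipF (g - convF g f) (g - convF g f) := by
        have : -(g - convF g f) = (0 : K → ℂ) - (g - convF g f) := by abel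
        rw [this, ipF_sub_left]
        simp [ipF]
      rw [hneg, ipF_self] at hre
      set s : ℝ := (Fintype.card K : ℝ)⁻¹ * ∑ η : K, ‖(g - convF g f) η‖ ^ 2 with hs
      have hs0 : 0 ≤ s := by
        rw [hs]; positivity
      have hrs : -s = r := by exact_mod_cast hre
      have : s = 0 := by linarith
      have hz : ipF (g - convF g f) (g - convF g f) = 0 := by
        rw [ipF_self, ← hs, this]; simp
      have := ipF_self_eq_zero hz
      rw [sub_eq_zero] at this
      exact this.symm
    exact (hfix f hfmem).symm
  · -- projection ⇒ Parseval
    rintro ⟨hconv, _⟩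
    intro g hg
    have hgf : convF g f = g := by
      refine Submodule.span_induction (p := fun x _ => convF x f = x) ?_ ?_ ?_ ?_ hg
      · rintro x ⟨ξ, rfl⟩
        rw [convF_ltF, ← hconv]
      · exact convF_zero_left f
      · intro x y _ _ hx hy
        rw [convF_add_left, hx, hy]
      · intro a x _ hx
        rw [convF_smul_left, hx]
    congr 1
    refine Finset.sum_congr rfl (fun ξ _ => ?_)
    rw [ipF_ltF g f hinv ξ, hgf]
end

section
/- Let K be a finite group and ρ = ⊕_π π^{⊕m_π} a unitary representation on H = ⊕_π H_π^{⊕m_π} (finite direct sum over irreducibles π with finite multiplicities m_π). Let 𝒜 = {f_j}_{j∈I} ⊂ H be a finite family, writing f_j = (f^π_{i,j})_{π, 1≤i≤m_π} with f^π_{i,j} ∈ H_π. Fix 0 < A ≤ B. Then (1/|K|)Σ_{j∈I}Σ_{ξ∈K} |⟨g, ρ(ξ)f_j⟩|² lies between A‖g‖² and B‖g‖² for all g ∈ H (i.e., the orbit is a frame for H with continuous bounds A, B) if and only if for every π and every (c_i)_{i=1}^{m_π} ∈ ℂ^{m_π}: d_π·A·Σ_i |c_i|² ≤ Σ_{j∈I}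 ‖Σ_{i=1}^{m_π} c_i f^π_{i,j}‖² ≤ d_π·B·Σ_i |c_i|², where d_π = dim H_π. Equivalently, the rows (f^π_{i,j})_{j∈I} of the coefficient array form a Riesz sequence in H_π^{⊕I} with bounds d_π A and d_π B. -/
/-!
Averaging `σ(ξ) ∘ T ∘ ρ(ξ)⁻¹` over `K` produces an intertwiner, so by Schur's lemma the averaged
matrix coefficients `⟨a, π(ξ) b⟩ ⟨π'(ξ) b', a'⟩` vanish for inequivalent `π, π'`, and for
`π = π'` they equal `d_π⁻¹ ⟨b', b⟩ ⟨a, a'⟩`, the constant being fixed by comparing traces.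
Hence the frame sum is block diagonal: for an orthonormal basis `(e_t)` of each `H_π` it equals
`Σ_π d_π⁻¹ Σ_t R_π(⟨g^π_i, e_t⟩)_i` with `R_π(c) = Σ_j ‖Σ_i c_i f^π_{i,j}‖²`. Parseval turns the
Riesz bounds of each `R_π` into frame bounds; conversely, testing the frame inequality on a `g`
supported in one block and pointing along one basis vector `e_t` recovers the Riesz bounds.
-/

open scoped InnerProductSpace
open Finset

namespace GroupFrame

variable {K : Type*} [Group K]
  {V W : Type*} [NormedAddCommGroup V] [InnerProductSpace ℂ V]
  [NormedAddCommGroup W] [InnerProductSpace ℂ W]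

def IsIrreducible (ρ : K →* (V ≃ₗᵢ[ℂ] V)) : Prop :=
  ∀ U : Submodule ℂ V, (∀ ξ : K, ∀ v ∈ U, ρ ξ v ∈ U) → U = ⊥ ∨ U = ⊤

def Intertwines (ρ : K →* (V ≃ₗᵢ[ℂ] V)) (σ : K →* (W ≃ₗᵢ[ℂ] W)) (T : V →ₗ[ℂ] W) : Prop :=
  ∀ (ξ : K) (v : V), T (ρ ξ v) = σ ξ (T v)

def IsEquivalent (ρ : K →* (V ≃ₗᵢ[ℂ] V)) (σ : K →* (W ≃ₗᵢ[ℂ] W)) : Prop :=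
  ∃ T : V ≃ₗ[ℂ] W, Intertwines ρ σ T

variable {ρ : K →* (V ≃ₗᵢ[ℂ] V)} {σ : K →* (W ≃ₗᵢ[ℂ] W)}

theorem IsIrreducible.exists_eq_smul_id [FiniteDimensional ℂ V] (hρ : IsIrreducible ρ)
    {T : V →ₗ[ℂ] V} (hT : Intertwines ρ ρ T) : ∃ μ : ℂ, T = μ • LinearMap.id := by
  cases subsingleton_or_nontrivial V
  · exact ⟨0, Subsingleton.elim _ _⟩
  obtain ⟨μ, hμ⟩ := Module.End.exists_eigenvalue T
  have hinv : ∀ ξ : K, ∀ v ∈ Module.End.eigenspace T μ, ρ ξ v ∈ Module.End.eigenspace T μ := by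
    intro ξ v hv
    rw [Module.End.mem_eigenspace_iff] at hv ⊢
    rw [hT, hv, map_smul]
  refine ⟨μ, LinearMap.ext fun v => ?_⟩
  have hv : v ∈ Module.End.eigenspace T μ := by
    rw [(hρ _ hinv).resolve_left hμ]
    exact Submodule.mem_top
  exact Module.End.mem_eigenspace_iff.mp hv

theorem Intertwines.eq_zero_of_not_isEquivalent (hρ : IsIrreducible ρ) (hσ : IsIrreducible σ)
    (hne : ¬ IsEquivalent ρ σ) {T : V →ₗ[ℂ] W} (hT : Intertwines ρ σ T) : T = 0 := by
  have hker : ∀ ξ : K, ∀ v ∈ LinearMap.ker T, ρ ξ v ∈ LinearMap.ker T := by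
    intro ξ v hv
    rw [LinearMap.mem_ker] at hv ⊢
    rw [hT, hv, map_zero]
  have hrange : ∀ ξ : K, ∀ w ∈ LinearMap.range T, σ ξ w ∈ LinearMap.range T := by
    rintro ξ w ⟨v, rfl⟩
    exact ⟨ρ ξ v, hT ξ v⟩
  obtain hker_bot | hker_top := hρ _ hker
  · obtain hrange_bot | hrange_top := hσ _ hrange
    · exact LinearMap.range_eq_bot.mp hrange_bot
    · exact (hne ⟨LinearEquiv.ofBijective T ⟨LinearMap.ker_eq_bot.mp hker_bot,
        LinearMap.range_eq_top.mp hrange_top⟩, hT⟩).elim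
  · exact LinearMap.ker_eq_top.mp hker_top

variable [Fintype K]

noncomputable def twirl (ρ : K →* (V ≃ₗᵢ[ℂ] V)) (σ : K →* (W ≃ₗᵢ[ℂ] W)) (T : V →ₗ[ℂ] W) :
    V →ₗ[ℂ] W :=
  (Fintype.card K : ℂ)⁻¹ • ∑ ξ, (ρ ξ).toLinearEquiv.arrowCongr (σ ξ).toLinearEquiv T

theorem twirl_apply (T : V →ₗ[ℂ] W) (x : V) :
    twirl ρ σ T x = (Fintype.card K : ℂ)⁻¹ • ∑ ξ, σ ξ (T ((ρ ξ).symm x)) := by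
  simp [twirl]

theorem intertwines_twirl (T : V →ₗ[ℂ] W) : Intertwines ρ σ (twirl ρ σ T) := by
  intro η x
  simp only [twirl_apply, map_smul, map_sum]
  congr 1
  refine (Fintype.sum_equiv (Equiv.mulLeft η) _ _ fun ξ => ?_).symm
  have : (ρ (η * ξ)).symm (ρ η x) = (ρ ξ).symm x := by
    rw [LinearIsometryEquiv.symm_apply_eq, map_mul, LinearIsometryEquiv.coe_mul,
      Function.comp_apply, LinearIsometryEquiv.apply_symm_apply]
  rw [Equiv.coe_mulLeft, this, map_mul, LinearIsometryEquiv.coe_mul, Function.comp_apply]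

theorem trace_twirl [FiniteDimensional ℂ V] (T : V →ₗ[ℂ] V) :
    LinearMap.trace ℂ V (twirl ρ ρ T) = LinearMap.trace ℂ V T := by
  have hK : (Fintype.card K : ℂ) ≠ 0 := Nat.cast_ne_zero.mpr Fintype.card_ne_zero
  simp only [twirl, map_smul, map_sum, ← LinearEquiv.conj.eq_def, LinearMap.trace_conj',
    sum_const, card_univ]
  rw [nsmul_eq_mul, smul_eq_mul, inv_mul_cancel_left₀ hK]

theorem IsIrreducible.twirl_eq_smul_id [FiniteDimensional ℂ V] (hρ : IsIrreducible ρ)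
    (T : V →ₗ[ℂ] V) :
    twirl ρ ρ T = (LinearMap.trace ℂ V T / Module.finrank ℂ V) • LinearMap.id := by
  obtain ⟨μ, hμ⟩ := hρ.exists_eq_smul_id (intertwines_twirl T)
  rcases eq_or_ne (Module.finrank ℂ V) 0 with hd | hd
  · have := Module.finrank_zero_iff.mp hd
    exact Subsingleton.elim _ _
  have htrace := trace_twirl (ρ := ρ) T
  rw [hμ, map_smul, LinearMap.trace_id, smul_eq_mul] at htrace
  rw [hμ, ← htrace, mul_div_cancel_right₀ _ (Nat.cast_ne_zero.mpr hd)]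

theorem inner_twirl_rankOne (a b : W) (a' b' : V) :
    ⟪a, twirl ρ σ (InnerProductSpace.rankOne ℂ b b' : V →ₗ[ℂ] W) a'⟫_ℂ
      = (Fintype.card K : ℂ)⁻¹ * ∑ ξ, ⟪a, σ ξ b⟫_ℂ * ⟪ρ ξ b', a'⟫_ℂ := by
  simp only [twirl_apply, inner_smul_right, inner_sum, ContinuousLinearMap.coe_coe,
    InnerProductSpace.rankOne_apply, map_smul, LinearIsometryEquiv.inner_map_eq_flip]
  simp only [mul_comm]

theorem average_inner_mul_inner_eq_zero_of_not_isEquivalent (hρ : IsIrreducible ρ)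
    (hσ : IsIrreducible σ) (hne : ¬ IsEquivalent ρ σ) (a b : W) (a' b' : V) :
    (Fintype.card K : ℂ)⁻¹ * ∑ ξ, ⟪a, σ ξ b⟫_ℂ * ⟪ρ ξ b', a'⟫_ℂ = 0 := by
  rw [← inner_twirl_rankOne, (intertwines_twirl _).eq_zero_of_not_isEquivalent hρ hσ hne,
    LinearMap.zero_apply, inner_zero_right]

theorem IsIrreducible.average_inner_mul_inner [FiniteDimensional ℂ V] (hρ : IsIrreducible ρ)
    (a b a' b' : V) :
    (Fintype.card K : ℂ)⁻¹ * ∑ ξ, ⟪a, ρ ξ b⟫_ℂ * ⟪ρ ξ b', a'⟫_ℂ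
      = (Module.finrank ℂ V : ℂ)⁻¹ * ⟪b', b⟫_ℂ * ⟪a, a'⟫_ℂ := by
  rw [← inner_twirl_rankOne, hρ.twirl_eq_smul_id, InnerProductSpace.trace_rankOne,
    LinearMap.smul_apply, LinearMap.id_apply, inner_smul_right, div_eq_inv_mul]

theorem forall_bounds_sum_iff {ι : Type*} [Fintype ι] {X : ι → Type*} [∀ i, Zero (X i)]
    (N Φ : ∀ i, X i → ℝ) (hN : ∀ i, N i 0 = 0) (hΦ : ∀ i, Φ i 0 = 0) (A B : ℝ) :
    (∀ x : ∀ i, X i, A * ∑ i, N i (x i) ≤ ∑ i, Φ i (x i) ∧ ∑ i, Φ i (x i) ≤ B * ∑ i, N i (x i))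
      ↔ ∀ i y, A * N i y ≤ Φ i y ∧ Φ i y ≤ B * N i y := by
  classical
  constructor
  · intro h i y
    have hsum (G : ∀ i, X i → ℝ) (hG : ∀ i, G i 0 = 0) :
        ∑ i', G i' (Pi.single i y i') = G i y := by
      rw [Fintype.sum_eq_single i fun i' hi' => by rw [Pi.single_eq_of_ne hi', hG],
        Pi.single_eq_same]
    simpa only [hsum N hN, hsum Φ hΦ] using h (Pi.single i y)
  · intro h x
    rw [mul_sum, mul_sum]
    exact ⟨sum_le_sum fun i _ => (h i (x i)).1, sum_le_sum fun i _ => (h i (x i)).2⟩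

theorem sum_sq_norm_sum_inner_smul {τ κ : Type*} [Fintype τ] [Fintype κ]
    (b : OrthonormalBasis τ ℂ V) (g : κ → V) (f : κ → W) :
    ((∑ t, ‖∑ k, ⟪g k, b t⟫_ℂ • f k‖ ^ 2 : ℝ) : ℂ)
      = ∑ k, ∑ k', ⟪f k', f k⟫_ℂ * ⟪g k, g k'⟫_ℂ := by
  have hnorm (v : W) : ((‖v‖ : ℂ) ^ 2) = ⟪v, v⟫_ℂ := (inner_self_eq_norm_sq_to_K v).symm
  push_cast
  simp only [hnorm, sum_inner, inner_sum, inner_smul_left, inner_smul_right, inner_conj_symm]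
  simp only [mul_sum]
  rw [sum_comm]
  refine sum_congr rfl fun k _ => ?_
  rw [sum_comm]
  refine sum_congr rfl fun k' _ => ?_
  rw [← b.sum_inner_mul_inner, mul_sum]
  exact sum_congr rfl fun t _ => by ring

theorem forall_bounds_sum_basis_iff {τ κ : Type*} [Fintype τ] [Nonempty τ] [Fintype κ]
    (b : OrthonormalBasis τ ℂ V) (R : (κ → ℂ) → ℝ) (hR : R 0 = 0) (a a' : ℝ) :
    (∀ g : κ → V, a * ∑ k, ‖g k‖ ^ 2 ≤ ∑ t, R (fun k => ⟪g k, b t⟫_ℂ)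
        ∧ ∑ t, R (fun k => ⟪g k, b t⟫_ℂ) ≤ a' * ∑ k, ‖g k‖ ^ 2)
      ↔ ∀ c : κ → ℂ, a * ∑ k, ‖c k‖ ^ 2 ≤ R c ∧ R c ≤ a' * ∑ k, ‖c k‖ ^ 2 := by
  classical
  constructor
  · intro hg c
    obtain ⟨t₀⟩ := ‹Nonempty τ›
    have hcoeff (t : τ) : (fun k => ⟪(starRingEnd ℂ) (c k) • b t₀, b t⟫_ℂ)
        = if t = t₀ then c else 0 := by
      funext k
      rw [inner_smul_left, starRingEnd_self_apply, orthonormal_iff_ite.mp b.orthonormal]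
      split_ifs <;> simp_all [eq_comm]
    have hR_sum : ∑ t, R (fun k => ⟪(starRingEnd ℂ) (c k) • b t₀, b t⟫_ℂ) = R c := by
      rw [Fintype.sum_eq_single t₀ fun t ht => by rw [hcoeff, if_neg ht, hR], hcoeff, if_pos rfl]
    have hnorm : ∑ k, ‖(starRingEnd ℂ) (c k) • b t₀‖ ^ 2 = ∑ k, ‖c k‖ ^ 2 := by
      simp [norm_smul, b.orthonormal.1 t₀]
    simpa only [hR_sum, hnorm] using hg fun k => (starRingEnd ℂ) (c k) • b t₀
  · intro hc g
    have hparseval : ∑ t, ∑ k, ‖⟪g k, b t⟫_ℂ‖ ^ 2 = ∑ k, ‖g k‖ ^ 2 := by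
      rw [sum_comm]
      exact sum_congr rfl fun k _ => b.sum_sq_norm_inner_left (g k)
    rw [← hparseval, mul_sum, mul_sum]
    exact ⟨sum_le_sum fun t _ => (hc _).1, sum_le_sum fun t _ => (hc _).2⟩

theorem forall_frame_bounds_iff_forall_riesz_bounds [FiniteDimensional ℂ V] {J κ : Type*}
    [Fintype J] [Fintype κ] (F : J → κ → V) (A B : ℝ) :
    (∀ g : κ → V, A * ∑ k, ‖g k‖ ^ 2 ≤ (Module.finrank ℂ V : ℝ)⁻¹ *
          ∑ t, ∑ j, ‖∑ k, ⟪g k, stdOrthonormalBasis ℂ V t⟫_ℂ • F j k‖ ^ 2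
        ∧ (Module.finrank ℂ V : ℝ)⁻¹ *
          ∑ t, ∑ j, ‖∑ k, ⟪g k, stdOrthonormalBasis ℂ V t⟫_ℂ • F j k‖ ^ 2 ≤ B * ∑ k, ‖g k‖ ^ 2)
      ↔ ∀ c : κ → ℂ,
        (Module.finrank ℂ V : ℝ) * A * ∑ k, ‖c k‖ ^ 2 ≤ ∑ j, ‖∑ k, c k • F j k‖ ^ 2
        ∧ ∑ j, ‖∑ k, c k • F j k‖ ^ 2 ≤ (Module.finrank ℂ V : ℝ) * B * ∑ k, ‖c k‖ ^ 2 := by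
  rcases Nat.eq_zero_or_pos (Module.finrank ℂ V) with hd | hd
  · have : Subsingleton V := Module.finrank_zero_iff.mp hd
    simp [hd, Subsingleton.elim _ (0 : V)]
  have : Nonempty (Fin (Module.finrank ℂ V)) := ⟨⟨0, hd⟩⟩
  have hd' : (0 : ℝ) < Module.finrank ℂ V := Nat.cast_pos.mpr hd
  simp only [le_inv_mul_iff₀ hd', inv_mul_le_iff₀ hd', ← mul_assoc]
  exact forall_bounds_sum_basis_iff _ (fun c => ∑ j, ‖∑ k, c k • F j k‖ ^ 2) (by simp) _ _

section Frame

variable {ι : Type*} [Fintype ι] {H : ι → Type*} [∀ i, NormedAddCommGroup (H i)]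
  [∀ i, InnerProductSpace ℂ (H i)] {π : ∀ i, K →* (H i ≃ₗᵢ[ℂ] H i)}
  {κ : ι → Type*} [∀ i, Fintype (κ i)]

theorem average_sq_norm_sum_sum_inner [∀ i, FiniteDimensional ℂ (H i)]
    (hirr : ∀ i, IsIrreducible (π i)) (hineq : ∀ i j, i ≠ j → ¬ IsEquivalent (π i) (π j))
    (f g : ∀ i, κ i → H i) :
    (((Fintype.card K : ℝ)⁻¹ * ∑ ξ, ‖∑ i, ∑ k, ⟪g i k, π i ξ (f i k)⟫_ℂ‖ ^ 2 : ℝ) : ℂ)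
      = ∑ i, (Module.finrank ℂ (H i) : ℂ)⁻¹ *
          ∑ k, ∑ k', ⟪f i k', f i k⟫_ℂ * ⟪g i k, g i k'⟫_ℂ := by
  classical
  have hcoeff : ∀ i k, (Fintype.card K : ℂ)⁻¹ * ∑ ξ, ⟪g i k, π i ξ (f i k)⟫_ℂ *
      (starRingEnd ℂ) (∑ i', ∑ k', ⟪g i' k', π i' ξ (f i' k')⟫_ℂ)
        = (Module.finrank ℂ (H i) : ℂ)⁻¹ * ∑ k', ⟪f i k', f i k⟫_ℂ * ⟪g i k, g i k'⟫_ℂ := by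
    intro i k
    calc _ = ∑ i', ∑ k', (Fintype.card K : ℂ)⁻¹ *
          ∑ ξ, ⟪g i k, π i ξ (f i k)⟫_ℂ * ⟪π i' ξ (f i' k'), g i' k'⟫_ℂ := by
          simp only [map_sum, inner_conj_symm, mul_sum]
          rw [sum_comm]
          refine sum_congr rfl fun i' _ => ?_
          rw [sum_comm]
      _ = _ := by
          rw [Fintype.sum_eq_single i fun i' hi' => sum_eq_zero fun k' _ =>
            average_inner_mul_inner_eq_zero_of_not_isEquivalent (hirr i') (hirr i)
              (hineq i' i hi') _ _ _ _, mul_sum]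
          exact sum_congr rfl fun k' _ => ((hirr i).average_inner_mul_inner _ _ _ _).trans
            (by ring)
  calc _ = ∑ i, ∑ k, (Fintype.card K : ℂ)⁻¹ * ∑ ξ, ⟪g i k, π i ξ (f i k)⟫_ℂ *
        (starRingEnd ℂ) (∑ i', ∑ k', ⟪g i' k', π i' ξ (f i' k')⟫_ℂ) := by
        push_cast
        simp only [← Complex.mul_conj', sum_mul, mul_sum]
        rw [sum_comm]
        exact sum_congr rfl fun i _ => sum_comm
    _ = _ := by simp only [hcoeff, mul_sum]

theorem frame_sum_eq [∀ i, FiniteDimensional ℂ (H i)]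
    (hirr : ∀ i, IsIrreducible (π i)) (hineq : ∀ i j, i ≠ j → ¬ IsEquivalent (π i) (π j))
    {I : Type*} [Fintype I] (f : I → ∀ i, κ i → H i) (g : ∀ i, κ i → H i) :
    (Fintype.card K : ℝ)⁻¹ * ∑ j, ∑ ξ, ‖∑ i, ∑ k, ⟪g i k, π i ξ (f j i k)⟫_ℂ‖ ^ 2
      = ∑ i, (Module.finrank ℂ (H i) : ℝ)⁻¹ *
          ∑ t, ∑ j, ‖∑ k, ⟪g i k, stdOrthonormalBasis ℂ (H i) t⟫_ℂ • f j i k‖ ^ 2 := by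
  have hj (j : I) : (Fintype.card K : ℝ)⁻¹ * ∑ ξ, ‖∑ i, ∑ k, ⟪g i k, π i ξ (f j i k)⟫_ℂ‖ ^ 2
      = ∑ i, (Module.finrank ℂ (H i) : ℝ)⁻¹ *
          ∑ t, ‖∑ k, ⟪g i k, stdOrthonormalBasis ℂ (H i) t⟫_ℂ • f j i k‖ ^ 2 := by
    apply Complex.ofReal_injective
    rw [average_sq_norm_sum_sum_inner hirr hineq]
    push_cast
    simp only [← Complex.ofReal_pow, ← Complex.ofReal_sum, sum_sq_norm_sum_inner_smul]
  rw [mul_sum, sum_congr rfl fun j _ => hj j, sum_comm]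
  simp only [← mul_sum]
  exact sum_congr rfl fun i _ => by rw [sum_comm]

end Frame

end GroupFrame

open GroupFrame in
theorem group_frame_duality_general
    {K : Type*} [Group K] [Fintype K]
    {ι : Type*} [Fintype ι]
    (Hπ : ι → Type*) [∀ i, NormedAddCommGroup (Hπ i)] [∀ i, InnerProductSpace ℂ (Hπ i)]
    [∀ i, FiniteDimensional ℂ (Hπ i)]
    (π : ∀ i, K →* (Hπ i ≃ₗᵢ[ℂ] Hπ i))
    (hirr : ∀ i, ∀ W : Submodule ℂ (Hπ i), (∀ ξ : K, ∀ v ∈ W, π i ξ v ∈ W) → W = ⊥ ∨ W = ⊤)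
    (hineq : ∀ i j, i ≠ j →
      ¬ ∃ T : Hπ i ≃ₗ[ℂ] Hπ j, ∀ (ξ : K) (v : Hπ i), T (π i ξ v) = π j ξ (T v))
    (m : ι → ℕ)
    {I : Type*} [Fintype I]
    (f : I → ∀ i, Fin (m i) → Hπ i)
    (A B : ℝ) :
    (∀ g : ∀ i, Fin (m i) → Hπ i,
        A * (∑ i, ∑ k, ‖g i k‖ ^ 2)
          ≤ (Fintype.card K : ℝ)⁻¹ * ∑ j : I, ∑ ξ : K,
              ‖∑ i, ∑ k, (inner ℂ (g i k) (π i ξ (f j i k)) : ℂ)‖ ^ 2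
        ∧ (Fintype.card K : ℝ)⁻¹ * ∑ j : I, ∑ ξ : K,
              ‖∑ i, ∑ k, (inner ℂ (g i k) (π i ξ (f j i k)) : ℂ)‖ ^ 2
          ≤ B * (∑ i, ∑ k, ‖g i k‖ ^ 2))
      ↔ (∀ i, ∀ c : Fin (m i) → ℂ,
          (Module.finrank ℂ (Hπ i) : ℝ) * A * ∑ k, ‖c k‖ ^ 2
            ≤ ∑ j : I, ‖∑ k, c k • f j i k‖ ^ 2
          ∧ ∑ j : I, ‖∑ k, c k • f j i k‖ ^ 2
            ≤ (Module.finrank ℂ (Hπ i) : ℝ) * B * ∑ k, ‖c k‖ ^ 2) := by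
  simp only [frame_sum_eq hirr hineq f]
  refine (forall_bounds_sum_iff (fun i (y : Fin (m i) → Hπ i) => ∑ k, ‖y k‖ ^ 2)
    (fun i y => (Module.finrank ℂ (Hπ i) : ℝ)⁻¹ *
      ∑ t, ∑ j, ‖∑ k, ⟪y k, stdOrthonormalBasis ℂ (Hπ i) t⟫_ℂ • f j i k‖ ^ 2)
    (by simp) (by simp) A B).trans ?_
  exact forall_congr' fun i =>
    forall_frame_bounds_iff_forall_riesz_bounds (fun j k => f j i k) A B

/-- Duality for group frames with multiple generators (finite group case): the orbit of
the family `{f_j}` under `ρ = ⊕_π π^{⊕ m_π}` is a frame for `H = ⊕_π H_π^{⊕ m_π}` with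
(continuous) bounds `A, B` iff for every `π` the rows of the coefficient array form a
Riesz sequence with bounds `d_π A, d_π B`. -/
theorem group_frame_duality
    {K : Type*} [Group K] [Fintype K]
    {ι : Type*} [Fintype ι]
    (Hπ : ι → Type*) [∀ i, NormedAddCommGroup (Hπ i)] [∀ i, InnerProductSpace ℂ (Hπ i)]
    [∀ i, FiniteDimensional ℂ (Hπ i)]
    (π : ∀ i, K →* (Hπ i ≃ₗᵢ[ℂ] Hπ i))
    (hirr : ∀ i, ∀ W : Submodule ℂ (Hπ i), (∀ ξ : K, ∀ v ∈ W, π i ξ v ∈ W) → W = ⊥ ∨ W = ⊤)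
    (hineq : ∀ i j, i ≠ j →
      ¬ ∃ T : Hπ i ≃ₗ[ℂ] Hπ j, ∀ (ξ : K) (v : Hπ i), T (π i ξ v) = π j ξ (T v))
    (m : ι → ℕ)
    {I : Type*} [Fintype I]
    (f : I → ∀ i, Fin (m i) → Hπ i)
    (A B : ℝ) (hA : 0 < A) (hAB : A ≤ B) :
    (∀ g : ∀ i, Fin (m i) → Hπ i,
        A * (∑ i, ∑ k, ‖g i k‖ ^ 2)
          ≤ (Fintype.card K : ℝ)⁻¹ * ∑ j : I, ∑ ξ : K,
              ‖∑ i, ∑ k, (inner ℂ (g i k) (π i ξ (f j i k)) : ℂ)‖ ^ 2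
        ∧ (Fintype.card K : ℝ)⁻¹ * ∑ j : I, ∑ ξ : K,
              ‖∑ i, ∑ k, (inner ℂ (g i k) (π i ξ (f j i k)) : ℂ)‖ ^ 2
          ≤ B * (∑ i, ∑ k, ‖g i k‖ ^ 2))
      ↔ (∀ i, ∀ c : Fin (m i) → ℂ,
          (Module.finrank ℂ (Hπ i) : ℝ) * A * ∑ k, ‖c k‖ ^ 2
            ≤ ∑ j : I, ‖∑ k, c k • f j i k‖ ^ 2
          ∧ ∑ j : I, ‖∑ k, c k • f j i k‖ ^ 2
            ≤ (Module.finrank ℂ (Hπ i) : ℝ) * B * ∑ k, ‖c k‖ ^ 2) :=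
  group_frame_duality_general Hπ π hirr hineq m f A B
end
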